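/- arXiv:2408.00127 — 4 statements merged into one kernel-verified Lean document; each statement's English description precedes it below -/
import Mathlib

section
/- Let n ≥ 1 and let ε = (ε_1, …, ε_n) be distributed according to the Curie-Weiss model with parameters d, β, h. Then Q_n^+ = sup_{x∈ℝ} P(ε_1 + ε_2 + ⋯ + ε_n ∈ (x−1, x+1)) = sup_{x∈ℝ} P(ε_1 + ε_2 + ⋯ + ε_n = x) = max_{k=0,1,…,n} C(n,k) (1/Z_{d,β,h}) exp((dβ/n)(2k−n)² + h(2k−n)). In particular, the supremum defining Q_n^+ is attained when v_1 = v_2 = ⋯ = v_n = 1. -/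
open Filter Asymptotics MeasureTheory ProbabilityTheory
open scoped BigOperators Classical

/-- The spin value associated to a Boolean: `true ↦ 1`, `false ↦ -1`. -/
noncomputable def spin (b : Bool) : ℝ := if b then 1 else -1

/-- Boltzmann weight of a configuration in the Curie-Weiss model with parameters `d, β, h`. -/
noncomputable def cwWeight (n d : ℕ) (β h : ℝ) (σ : Fin n → Bool) : ℝ :=
  Real.exp ((d : ℝ) * β / (n : ℝ) * (∑ j, spin (σ j)) ^ 2 + h * ∑ j, spin (σ j))

/-- Partition function `Z_{d,β,h}` of the Curie-Weiss model on `n` sites. -/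
noncomputable def cwZ (n d : ℕ) (β h : ℝ) : ℝ :=
  ∑ σ : Fin n → Bool, cwWeight n d β h σ

/-- Probability of an event `E` under the Curie-Weiss model. -/
noncomputable def cwProb (n d : ℕ) (β h : ℝ) (E : Set (Fin n → Bool)) : ℝ :=
  (∑ σ : Fin n → Bool, if σ ∈ E then cwWeight n d β h σ else 0) / cwZ n d β h

/-- `Q_n^+` for the Curie-Weiss model. -/
noncomputable def Qplus (n d : ℕ) (β h : ℝ) : ℝ :=
  ⨆ x : ℝ, ⨆ v : {v : Fin n → ℝ // ∀ i, 1 ≤ v i},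
    cwProb n d β h {σ | ∑ i, v.1 i * spin (σ i) ∈ Set.Ioo (x - 1) (x + 1)}

/-- `Q_n` for the Curie-Weiss model. -/
noncomputable def Qfull (n d : ℕ) (β h : ℝ) : ℝ :=
  ⨆ x : ℝ, ⨆ v : {v : Fin n → ℝ // ∀ i, 1 ≤ |v i|},
    cwProb n d β h {σ | ∑ i, v.1 i * spin (σ i) ∈ Set.Ioo (x - 1) (x + 1)}

/-! ### Auxiliary definitions and lemmas -/

/-- The weight of a configuration with `k` plus-spins. -/
noncomputable def gwt (n d : ℕ) (β h : ℝ) (k : ℕ) : ℝ :=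
  Real.exp ((d : ℝ) * β / (n : ℝ) * (2 * (k : ℝ) - (n : ℝ)) ^ 2
    + h * (2 * (k : ℝ) - (n : ℝ)))

lemma gwt_pos (n d : ℕ) (β h : ℝ) (k : ℕ) : 0 < gwt n d β h k := Real.exp_pos _

/-- Configurations correspond to finsets (the set of `+1` spins). -/
noncomputable def cfg (n : ℕ) : (Fin n → Bool) ≃ Finset (Fin n) where
  toFun σ := Finset.univ.filter fun i => σ i = true
  invFun S := fun i => decide (i ∈ S)
  left_inv σ := by funext i; simp
  right_inv S := by ext i; simp

lemma cfg_apply (n : ℕ) (σ : Fin n → Bool) :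
    cfg n σ = Finset.univ.filter fun i => σ i = true := rfl

lemma spin_sum_eq (n : ℕ) (σ : Fin n → Bool) :
    (∑ j, spin (σ j)) = 2 * ((cfg n σ).card : ℝ) - n := by
  have h1 : ∀ j : Fin n, spin (σ j) = 2 * (if σ j = true then (1:ℝ) else 0) - 1 := by
    intro j; cases σ j <;> simp [spin] <;> norm_num
  rw [Finset.sum_congr rfl fun j _ => h1 j, Finset.sum_sub_distrib, ← Finset.mul_sum,
    Finset.sum_boole, Finset.sum_const, Finset.card_univ, Fintype.card_fin, cfg_apply]
  simp

lemma cwWeight_eq (n d : ℕ) (β h : ℝ) (σ : Fin n → Bool) :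
    cwWeight n d β h σ = gwt n d β h (cfg n σ).card := by
  rw [cwWeight, gwt, spin_sum_eq]

lemma wsum_eq (n : ℕ) (v : Fin n → ℝ) (σ : Fin n → Bool) :
    (∑ i, v i * spin (σ i)) = ∑ i ∈ cfg n σ, v i - ∑ i ∈ (cfg n σ)ᶜ, v i := by
  have h1 : ∀ i : Fin n, v i * spin (σ i) = if σ i = true then v i else -(v i) := by
    intro i; cases σ i <;> simp [spin]
  rw [Finset.sum_congr rfl fun i _ => h1 i, Finset.sum_ite, Finset.sum_neg_distrib,
    cfg_apply, ← sub_eq_add_neg]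
  congr 1
  rw [Finset.filter_not, Finset.compl_eq_univ_sdiff]

lemma num_le (n d : ℕ) (β h : ℝ) (v : Fin n → ℝ) (hv : ∀ i, 1 ≤ v i) (x M : ℝ)
    (hM : ∀ k ≤ n, (n.choose k : ℝ) * gwt n d β h k ≤ M) :
    (∑ σ : Fin n → Bool,
        if (∑ i, v i * spin (σ i)) ∈ Set.Ioo (x - 1) (x + 1) then cwWeight n d β h σ else 0)
      ≤ M := by
  classical
  have hM0 : (0:ℝ) ≤ M := by
    refine le_trans ?_ (hM 0 (Nat.zero_le n))
    simp [le_of_lt (gwt_pos n d β h 0)]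
  set F : Finset (Fin n) → ℝ := fun S =>
    if (∑ i ∈ S, v i - ∑ i ∈ Sᶜ, v i) ∈ Set.Ioo (x - 1) (x + 1) then gwt n d β h S.card else 0
    with hF
  have hrw : (∑ σ : Fin n → Bool,
      if (∑ i, v i * spin (σ i)) ∈ Set.Ioo (x - 1) (x + 1) then cwWeight n d β h σ else 0)
      = ∑ S : Finset (Fin n), F S := by
    rw [← Equiv.sum_comp (cfg n) F]
    refine Finset.sum_congr rfl fun σ _ => ?_
    rw [hF, wsum_eq n v σ, cwWeight_eq]
  set 𝒜 : Finset (Finset (Fin n)) := Finset.univ.filter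
      (fun S => (∑ i ∈ S, v i - ∑ i ∈ Sᶜ, v i) ∈ Set.Ioo (x - 1) (x + 1)) with h𝒜
  have hrw2 : (∑ S : Finset (Fin n), F S) = ∑ S ∈ 𝒜, gwt n d β h S.card := by
    rw [h𝒜, Finset.sum_filter]
  have hanti : IsAntichain (· ⊆ ·) (𝒜 : Set (Finset (Fin n))) := by
    intro S hS T hT hne hsub
    simp only [h𝒜, Finset.coe_filter, Set.mem_setOf_eq, Finset.mem_univ, true_and,
      Set.mem_Ioo] at hS hT
    have hTS : (T \ S).Nonempty := by
      rw [Finset.sdiff_nonempty]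
      exact fun hTsub => hne (Finset.Subset.antisymm hsub hTsub)
    have h1 : (1:ℝ) ≤ ∑ i ∈ T \ S, v i := by
      have h2 := Finset.card_nsmul_le_sum (T \ S) v 1 fun i _ => hv i
      rw [nsmul_eq_mul, mul_one] at h2
      refine le_trans ?_ h2
      exact_mod_cast Finset.card_pos.2 hTS
    have e1 : ∑ i ∈ T, v i = ∑ i ∈ T \ S, v i + ∑ i ∈ S, v i := (Finset.sum_sdiff hsub).symm
    have e2 : ∑ i ∈ Sᶜ, v i = ∑ i ∈ Sᶜ \ Tᶜ, v i + ∑ i ∈ Tᶜ, v i :=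
      (Finset.sum_sdiff (Finset.compl_subset_compl.2 hsub)).symm
    rw [compl_sdiff_compl] at e2
    linarith [hS.1, hS.2, hT.1, hT.2]
  have lym := Finset.sum_card_slice_div_choose_le_one (𝕜 := ℝ) hanti
  rw [Fintype.card_fin] at lym
  have grp : (∑ S ∈ 𝒜, gwt n d β h S.card)
      = ∑ r ∈ Finset.range (n+1), ((𝒜.slice r).card : ℝ) * gwt n d β h r := by
    rw [← Finset.sum_fiberwise_of_maps_to (g := Finset.card) (t := Finset.range (n+1))
      (fun S _ => Finset.mem_range.2 (Nat.lt_succ_of_le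
        (le_trans (Finset.card_le_univ S) (by simp))))]
    refine Finset.sum_congr rfl fun r _ => ?_
    have hslice : Finset.filter (fun S => S.card = r) 𝒜 = 𝒜.slice r := rfl
    rw [hslice, Finset.sum_congr rfl fun S hS => by rw [(Finset.mem_slice.1 hS).2],
      Finset.sum_const, nsmul_eq_mul]
  rw [hrw, hrw2, grp]
  calc (∑ r ∈ Finset.range (n+1), ((𝒜.slice r).card : ℝ) * gwt n d β h r)
      ≤ ∑ r ∈ Finset.range (n+1), ((𝒜.slice r).card : ℝ) / (n.choose r) * M := by
        refine Finset.sum_le_sum fun r hr => ?_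
        have hrn : r ≤ n := Nat.lt_succ_iff.1 (Finset.mem_range.1 hr)
        have hc : (0:ℝ) < (n.choose r : ℝ) := by exact_mod_cast Nat.choose_pos hrn
        have h1 : ((𝒜.slice r).card : ℝ) * gwt n d β h r
            = ((𝒜.slice r).card : ℝ) / (n.choose r) * ((n.choose r : ℝ) * gwt n d β h r) := by
          field_simp
        rw [h1]
        exact mul_le_mul_of_nonneg_left (hM r hrn) (by positivity)
    _ = (∑ r ∈ Finset.range (n+1), ((𝒜.slice r).card : ℝ) / (n.choose r)) * M := by
        rw [Finset.sum_mul]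
    _ ≤ 1 * M := mul_le_mul_of_nonneg_right lym hM0
    _ = M := one_mul M

lemma num_level (n d : ℕ) (β h : ℝ) (k : ℕ) :
    (∑ σ : Fin n → Bool,
        if (cfg n σ).card = k then cwWeight n d β h σ else 0)
      = (n.choose k : ℝ) * gwt n d β h k := by
  classical
  set F : Finset (Fin n) → ℝ := fun S => if S.card = k then gwt n d β h S.card else 0 with hF
  have hrw : (∑ σ : Fin n → Bool, if (cfg n σ).card = k then cwWeight n d β h σ else 0)
      = ∑ S : Finset (Fin n), F S := by
    rw [← Equiv.sum_comp (cfg n) F]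
    exact Finset.sum_congr rfl fun σ _ => by rw [hF, cwWeight_eq]
  rw [hrw, hF, ← Finset.sum_filter]
  have hpow : Finset.univ.filter (fun S : Finset (Fin n) => S.card = k)
      = Finset.powersetCard k Finset.univ := by
    rw [Finset.powersetCard_eq_filter, Finset.powerset_univ]
  rw [Finset.sum_congr hpow fun S hS => by rw [(Finset.mem_powersetCard.1 hS).2],
    Finset.sum_const, Finset.card_powersetCard, nsmul_eq_mul, Finset.card_univ,
    Fintype.card_fin]

lemma cond_Ioo (n : ℕ) (k : ℕ) (σ : Fin n → Bool) :
    ((∑ i, spin (σ i)) ∈ Set.Ioo ((2*(k:ℝ) - n) - 1) ((2*(k:ℝ) - n) + 1))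
      ↔ (cfg n σ).card = k := by
  rw [spin_sum_eq, Set.mem_Ioo]
  constructor
  · rintro ⟨h1, h2⟩
    have hj1 : ((cfg n σ).card : ℝ) < k + 1 := by linarith
    have hj2 : (k : ℝ) < (cfg n σ).card + 1 := by linarith
    have hj1' : (cfg n σ).card < k + 1 := by exact_mod_cast hj1
    have hj2' : k < (cfg n σ).card + 1 := by exact_mod_cast hj2
    omega
  · rintro rfl
    constructor <;> linarith

lemma cond_point (n : ℕ) (k : ℕ) (σ : Fin n → Bool) :
    ((∑ i, spin (σ i)) = (2*(k:ℝ) - n)) ↔ (cfg n σ).card = k := by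
  rw [spin_sum_eq]
  constructor
  · intro h1
    have : ((cfg n σ).card : ℝ) = k := by linarith
    exact_mod_cast this
  · rintro rfl; rfl

lemma sum_ite_wcongr {α : Type*} [Fintype α] {p q : α → Prop} {hp : DecidablePred p}
    {hq : DecidablePred q} (w : α → ℝ) (hpq : ∀ a, p a ↔ q a) :
    (∑ a, @ite _ (p a) (hp a) (w a) 0) = ∑ a, @ite _ (q a) (hq a) (w a) 0 :=
  Finset.sum_congr rfl fun a _ => if_congr (hpq a) rfl rfl

private lemma div_le_div_aux {a b c : ℝ} (hc : 0 < c) (hab : a ≤ b) : a / c ≤ b / c :=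
  div_le_div_of_nonneg_right hab hc.le

/-- Positive Littlewood-Offord problem for the Curie-Weiss model: `Q_n^+` equals the
supremum over `x` of `P(ε_1 + ⋯ + ε_n ∈ (x-1, x+1))`, which equals the supremum over `x`
of `P(ε_1 + ⋯ + ε_n = x)`, which equals
`max_{k=0,…,n} C(n,k) (1/Z_{d,β,h}) exp((dβ/n)(2k-n)² + h(2k-n))`.
In particular `Q_n^+` is attained for `v_1 = ⋯ = v_n = 1`. -/
theorem Qplus_curie_weiss (n d : ℕ) (hn : 1 ≤ n) (hd : 0 < d) (β h : ℝ) (hβ : 0 ≤ β) :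
    Qplus n d β h
      = (⨆ x : ℝ, cwProb n d β h {σ | ∑ i, spin (σ i) ∈ Set.Ioo (x - 1) (x + 1)}) ∧
    Qplus n d β h
      = (⨆ x : ℝ, cwProb n d β h {σ | ∑ i, spin (σ i) = x}) ∧
    Qplus n d β h
      = ⨆ k : Fin (n + 1),
          (n.choose (k : ℕ) : ℝ) / cwZ n d β h
            * Real.exp ((d : ℝ) * β / (n : ℝ) * (2 * ((k : ℕ) : ℝ) - (n : ℝ)) ^ 2
                + h * (2 * ((k : ℕ) : ℝ) - (n : ℝ))) := by
  classical
  have hZ : 0 < cwZ n d β h :=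
    Finset.sum_pos (fun σ _ => Real.exp_pos _) Finset.univ_nonempty
  obtain ⟨k₀, hk₀⟩ := Finite.exists_max
    (fun k : Fin (n+1) => (n.choose (k:ℕ) : ℝ) * gwt n d β h (k:ℕ))
  set M := (n.choose (k₀:ℕ) : ℝ) * gwt n d β h (k₀:ℕ) with hMdef
  have hM : ∀ k ≤ n, (n.choose k : ℝ) * gwt n d β h k ≤ M := by
    intro k hk
    exact hk₀ ⟨k, Nat.lt_succ_of_le hk⟩
  haveI : Nonempty {v : Fin n → ℝ // ∀ i, 1 ≤ v i} := ⟨⟨fun _ => 1, fun _ => le_refl 1⟩⟩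
  -- the upper bound on probabilities
  have prob_le : ∀ (v : Fin n → ℝ), (∀ i, 1 ≤ v i) → ∀ x : ℝ,
      cwProb n d β h {σ | ∑ i, v i * spin (σ i) ∈ Set.Ioo (x-1) (x+1)} ≤ M / cwZ n d β h := by
    intro v hv x
    rw [cwProb]
    refine div_le_div_aux hZ ?_
    exact le_trans (le_of_eq (sum_ite_wcongr _ fun σ => Iff.rfl))
      (num_le n d β h v hv x M hM)
  have num1_le : ∀ x : ℝ,
      (∑ σ : Fin n → Bool,
        if (∑ i, spin (σ i)) ∈ Set.Ioo (x-1) (x+1) then cwWeight n d β h σ else 0) ≤ M := by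
    intro x
    have := num_le n d β h (fun _ => 1) (fun _ => le_refl 1) x M hM
    simpa only [one_mul] using this
  set x₀ : ℝ := 2 * ((k₀:ℕ) : ℝ) - n with hx₀
  -- value of the Ioo event at x₀
  have num_Ioo_eq : (∑ σ : Fin n → Bool,
      if (∑ i, spin (σ i)) ∈ Set.Ioo (x₀ - 1) (x₀ + 1) then cwWeight n d β h σ else 0) = M := by
    rw [Finset.sum_congr rfl fun σ _ =>
      if_congr (cond_Ioo n (k₀:ℕ) σ) rfl rfl, num_level]
  have num_point_eq : (∑ σ : Fin n → Bool,
      if (∑ i, spin (σ i)) = x₀ then cwWeight n d β h σ else 0) = M := by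
    rw [Finset.sum_congr rfl fun σ _ =>
      if_congr (cond_point n (k₀:ℕ) σ) rfl rfl, num_level]
  -- the three probability statements at x₀
  have prob_Ioo_eq : cwProb n d β h {σ | ∑ i, spin (σ i) ∈ Set.Ioo (x₀-1) (x₀+1)}
      = M / cwZ n d β h := by
    rw [cwProb]
    exact congrArg (· / cwZ n d β h) ((sum_ite_wcongr _ fun σ => Iff.rfl).trans num_Ioo_eq)
  have prob_point_eq : cwProb n d β h {σ | ∑ i, spin (σ i) = x₀} = M / cwZ n d β h := by
    rw [cwProb]
    exact congrArg (· / cwZ n d β h) ((sum_ite_wcongr _ fun σ => Iff.rfl).trans num_point_eq)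
  have prob1_le : ∀ x : ℝ,
      cwProb n d β h {σ | ∑ i, spin (σ i) ∈ Set.Ioo (x-1) (x+1)} ≤ M / cwZ n d β h := by
    intro x
    rw [cwProb]
    refine div_le_div_aux hZ ?_
    exact le_trans (le_of_eq (sum_ite_wcongr _ fun σ => Iff.rfl)) (num1_le x)
  have prob_pt_le : ∀ x : ℝ,
      cwProb n d β h {σ | ∑ i, spin (σ i) = x} ≤ M / cwZ n d β h := by
    intro x
    rw [cwProb]
    refine div_le_div_aux hZ ?_
    refine le_trans (Finset.sum_le_sum fun σ _ => ?_) (num1_le x)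
    simp only [Set.mem_setOf_eq]
    by_cases hσ : (∑ i, spin (σ i)) = x
    · rw [if_pos hσ, if_pos (Set.mem_Ioo.2 ⟨by rw [hσ]; linarith, by rw [hσ]; linarith⟩)]
    · rw [if_neg hσ]
      split
      · exact (Real.exp_pos _).le
      · exact le_refl 0
  -- computing Qplus
  have hQ : Qplus n d β h = M / cwZ n d β h := by
    refine le_antisymm (ciSup_le fun x => ciSup_le fun v => prob_le v.1 v.2 x) ?_
    have hbdd_out : BddAbove (Set.range fun x : ℝ =>
        ⨆ v : {v : Fin n → ℝ // ∀ i, 1 ≤ v i},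
          cwProb n d β h {σ | ∑ i, v.1 i * spin (σ i) ∈ Set.Ioo (x-1) (x+1)}) := by
      refine ⟨M / cwZ n d β h, ?_⟩
      rintro y ⟨x, rfl⟩
      exact ciSup_le fun v => prob_le v.1 v.2 x
    refine le_ciSup_of_le hbdd_out x₀ ?_
    have hbdd_in : BddAbove (Set.range fun v : {v : Fin n → ℝ // ∀ i, 1 ≤ v i} =>
        cwProb n d β h {σ | ∑ i, v.1 i * spin (σ i) ∈ Set.Ioo (x₀-1) (x₀+1)}) := by
      refine ⟨M / cwZ n d β h, ?_⟩
      rintro y ⟨v, rfl⟩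
      exact prob_le v.1 v.2 x₀
    refine le_ciSup_of_le hbdd_in ⟨fun _ => 1, fun _ => le_refl 1⟩ ?_
    refine le_of_eq ?_
    rw [← prob_Ioo_eq]
    congr 1
    ext σ
    simp [one_mul]
  refine ⟨?_, ?_, ?_⟩
  · rw [hQ]
    refine (le_antisymm (ciSup_le prob1_le) ?_).symm
    have hbdd : BddAbove (Set.range fun x : ℝ =>
        cwProb n d β h {σ | ∑ i, spin (σ i) ∈ Set.Ioo (x-1) (x+1)}) := by
      refine ⟨M / cwZ n d β h, ?_⟩
      rintro y ⟨x, rfl⟩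
      exact prob1_le x
    exact le_ciSup_of_le hbdd x₀ (le_of_eq prob_Ioo_eq.symm)
  · rw [hQ]
    refine (le_antisymm (ciSup_le prob_pt_le) ?_).symm
    have hbdd : BddAbove (Set.range fun x : ℝ =>
        cwProb n d β h {σ | ∑ i, spin (σ i) = x}) := by
      refine ⟨M / cwZ n d β h, ?_⟩
      rintro y ⟨x, rfl⟩
      exact prob_pt_le x
    exact le_ciSup_of_le hbdd x₀ (le_of_eq prob_point_eq.symm)
  · rw [hQ]
    have hterm : ∀ k : Fin (n+1),
        (n.choose (k : ℕ) : ℝ) / cwZ n d β h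
            * Real.exp ((d : ℝ) * β / (n : ℝ) * (2 * ((k : ℕ) : ℝ) - (n : ℝ)) ^ 2
                + h * (2 * ((k : ℕ) : ℝ) - (n : ℝ)))
          = ((n.choose (k:ℕ) : ℝ) * gwt n d β h (k:ℕ)) / cwZ n d β h := by
      intro k
      rw [gwt, div_mul_eq_mul_div]
    rw [iSup_congr hterm]
    refine le_antisymm ?_ (ciSup_le fun k => div_le_div_aux hZ (hk₀ k))
    have hbdd : BddAbove (Set.range fun k : Fin (n+1) =>
        ((n.choose (k:ℕ) : ℝ) * gwt n d β h (k:ℕ)) / cwZ n d β h) :=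
      Set.Finite.bddAbove (Set.finite_range _)
    exact le_ciSup_of_le hbdd k₀ (le_refl _)
end

section
/- Let n ≥ 2 be an even integer, let d be a positive integer, β ≥ 0 and h real. Define O_{d,β,h} = Σ_{σ ∈ {-1,1}^n : Σ_{i=1}^{n/2} σ_i − Σ_{i=n/2+1}^{n} σ_i = 0} exp((dβ/n)(Σ_{j=1}^n σ_j)² + h Σ_{j=1}^n σ_j). Let Y be a standard Gaussian random variable and U a random variable uniformly distributed on (−π, π), with Y and U independent. Then O_{d,β,h} = 2^{n/2} E[(cosh(2√(2dβ/n) Y + 2h) + cos U)^{n/2}]. -/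
open Filter Asymptotics MeasureTheory ProbabilityTheory
open scoped BigOperators Classical

/- ######################################################################
   Auxiliary material for the proof.
   ###################################################################### -/

section Aux

open Real
open scoped NNReal ENNReal

/-- Pointwise identity used for the Gaussian moment generating function. -/
lemma CW.gauss_pointwise (t x : ℝ) :
    Real.exp (t * x) * gaussianPDFReal 0 1 x = Real.exp (t ^ 2 / 2) * gaussianPDFReal t 1 x := by
  simp only [gaussianPDFReal, NNReal.coe_one, mul_one, sub_zero]
  rw [mul_left_comm, mul_left_comm (Real.exp (t ^ 2 / 2)), ← Real.exp_add, ← Real.exp_add]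
  congr 1
  ring

lemma CW.integrable_exp_gauss (t : ℝ) :
    Integrable (fun x => Real.exp (t * x)) (gaussianReal 0 1) := by
  rw [gaussianReal_of_var_ne_zero 0 one_ne_zero,
    integrable_withDensity_iff (measurable_gaussianPDF 0 1)
      (Filter.Eventually.of_forall fun x => ENNReal.ofReal_lt_top)]
  have : (fun x => Real.exp (t * x) * (gaussianPDF 0 1 x).toReal)
      = fun x => Real.exp (t ^ 2 / 2) * gaussianPDFReal t 1 x := by
    funext x
    rw [gaussianPDF, ENNReal.toReal_ofReal (gaussianPDFReal_nonneg 0 1 x), CW.gauss_pointwise]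
  rw [this]
  exact (integrable_gaussianPDFReal t 1).const_mul _

lemma CW.integral_exp_gauss (t : ℝ) :
    ∫ x, Real.exp (t * x) ∂(gaussianReal 0 1) = Real.exp (t ^ 2 / 2) := by
  rw [gaussianReal_of_var_ne_zero 0 one_ne_zero]
  have hd : gaussianPDF 0 1 = fun x => ((Real.toNNReal (gaussianPDFReal 0 1 x) : ℝ≥0) : ℝ≥0∞) := by
    funext x; rw [gaussianPDF, ENNReal.ofReal]
  rw [hd, integral_withDensity_eq_integral_smul
    ((measurable_gaussianPDFReal 0 1).real_toNNReal)]
  have : (fun x => Real.toNNReal (gaussianPDFReal 0 1 x) • Real.exp (t * x))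
      = fun x => Real.exp (t ^ 2 / 2) * gaussianPDFReal t 1 x := by
    funext x
    rw [NNReal.smul_def, smul_eq_mul, Real.coe_toNNReal _ (gaussianPDFReal_nonneg 0 1 x),
      mul_comm, CW.gauss_pointwise]
  rw [this, integral_const_mul, integral_gaussianPDFReal_eq_one t one_ne_zero, mul_one]

/-- Integral of `cos (k x)` against the uniform distribution on `(-π, π)`. -/
lemma CW.integral_cos_unif (k : ℤ) :
    ∫ x, Real.cos (k * x)
        ∂((ENNReal.ofReal (2 * Real.pi))⁻¹ • volume.restrict (Set.Ioo (-Real.pi) Real.pi))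
      = if k = 0 then 1 else 0 := by
  have hπ : (0:ℝ) < 2 * Real.pi := by positivity
  rw [integral_smul_measure, ENNReal.toReal_inv, ENNReal.toReal_ofReal hπ.le]
  have hIoo : ∫ x in Set.Ioo (-Real.pi) Real.pi, Real.cos (k * x)
      = ∫ x in (-Real.pi)..Real.pi, Real.cos (k * x) := by
    rw [intervalIntegral.integral_of_le (by linarith [Real.pi_pos] : -Real.pi ≤ Real.pi),
      integral_Ioc_eq_integral_Ioo]
  rw [smul_eq_mul, hIoo]
  by_cases hk : k = 0
  · simp [hk]
    field_simp
    ring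
  · have hk' : (k:ℝ) ≠ 0 := Int.cast_ne_zero.mpr hk
    have := intervalIntegral.integral_comp_mul_left (a := -Real.pi) (b := Real.pi)
      (c := (k:ℝ)) (fun x => Real.cos x) hk'
    rw [this]
    have h1 : Real.sin ((k:ℝ) * Real.pi) = 0 := Real.sin_int_mul_pi k
    have h2 : Real.sin ((k:ℝ) * -Real.pi) = 0 := by
      rw [mul_neg, Real.sin_neg, h1, neg_zero]
    rw [integral_cos, h1, h2]
    simp [hk]

/-- Integer charge of a pair of spins. -/
def CW.kk (p : Bool × Bool) : ℤ := (if p.1 then 1 else 0) - (if p.2 then 1 else 0)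

lemma CW.spin_sub_spin (a b : Bool) : spin a - spin b = 2 * (CW.kk (a, b) : ℝ) := by
  cases a <;> cases b <;> norm_num [spin, CW.kk]

lemma CW.key_complex (m : ℕ) (t v : ℝ) :
    ∑ g : Fin m → Bool × Bool,
      Complex.exp ((t * ∑ j, (spin (g j).1 + spin (g j).2) : ℝ)
        + ((∑ j, CW.kk (g j) : ℤ) : ℂ) * v * Complex.I)
      = ((2 * Real.cosh (2 * t) + 2 * Real.cos v : ℝ) : ℂ) ^ m := by
  have hfac : ∀ g : Fin m → Bool × Bool,
      Complex.exp ((t * ∑ j, (spin (g j).1 + spin (g j).2) : ℝ)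
        + ((∑ j, CW.kk (g j) : ℤ) : ℂ) * v * Complex.I)
      = ∏ j, Complex.exp ((t * (spin (g j).1 + spin (g j).2) : ℝ)
        + ((CW.kk (g j) : ℤ) : ℂ) * v * Complex.I) := by
    intro g
    rw [← Complex.exp_sum]
    congr 1
    push_cast
    rw [Finset.mul_sum, Finset.sum_mul, Finset.sum_mul, ← Finset.sum_add_distrib]
  simp_rw [hfac]
  classical
  rw [← Fintype.piFinset_univ]
  rw [← Finset.prod_univ_sum (fun _ : Fin m => (Finset.univ : Finset (Bool × Bool)))
    (fun _ p => Complex.exp ((t * (spin p.1 + spin p.2) : ℝ) + ((CW.kk p : ℤ) : ℂ) * v * Complex.I))]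
  rw [Finset.prod_const]
  have hcard : (Finset.univ : Finset (Fin m)).card = m :=
    Finset.card_univ.trans (Fintype.card_fin m)
  rw [hcard]
  congr 1
  rw [Fintype.sum_prod_type]
  simp only [Fintype.sum_bool]
  norm_num [spin, CW.kk]
  have h1 := Complex.two_cosh (x := 2 * (t:ℂ))
  have h2 := Complex.two_cos (x := (v:ℂ))
  ring_nf at h1 h2 ⊢
  linear_combination -h1 - h2

lemma CW.sum_id (m : ℕ) (t u : ℝ) :
    ∑ g : Fin m → Bool × Bool,
      Real.exp (t * ∑ j, (spin (g j).1 + spin (g j).2))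
        * Real.cos (((∑ j, CW.kk (g j) : ℤ) : ℝ) * u)
      = (2 * Real.cosh (2 * t) + 2 * Real.cos u) ^ m := by
  have hA := CW.key_complex m t u
  have hB := CW.key_complex m t (-u)
  rw [Real.cos_neg] at hB
  push_cast at hB
  apply Complex.ofReal_injective
  rw [Complex.ofReal_sum]
  have per : ∀ g : Fin m → Bool × Bool,
      ((Real.exp (t * ∑ j, (spin (g j).1 + spin (g j).2))
        * Real.cos (((∑ j, CW.kk (g j) : ℤ) : ℝ) * u) : ℝ) : ℂ)
      = (Complex.exp ((t * ∑ j, (spin (g j).1 + spin (g j).2) : ℝ)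
            + ((∑ j, CW.kk (g j) : ℤ) : ℂ) * u * Complex.I)
        + Complex.exp ((t * ∑ j, (spin (g j).1 + spin (g j).2) : ℝ)
            + ((∑ j, CW.kk (g j) : ℤ) : ℂ) * (-u) * Complex.I)) / 2 := by
    intro g
    rw [Complex.exp_add, Complex.exp_add,
      show ((∑ j, CW.kk (g j) : ℤ) : ℂ) * (-u) * Complex.I
        = -(((∑ j, CW.kk (g j) : ℤ) : ℂ) * u * Complex.I) by push_cast; ring,
      Complex.ofReal_mul, Complex.ofReal_exp, Complex.ofReal_cos]
    have h2 := Complex.two_cos (x := ((∑ j, CW.kk (g j) : ℤ) : ℂ) * u)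
    have harg : ((((∑ j, CW.kk (g j) : ℤ) : ℝ) * u : ℝ) : ℂ)
        = ((∑ j, CW.kk (g j) : ℤ) : ℂ) * u := by
      push_cast; ring
    rw [harg]
    rw [neg_mul] at h2
    linear_combination
      (Complex.exp ((t * ∑ j, (spin (g j).1 + spin (g j).2) : ℝ)) / 2) * h2
  rw [Finset.sum_congr rfl (fun g _ => per g), ← Finset.sum_div, Finset.sum_add_distrib, hA]
  push_cast
  rw [hB]
  ring

/-- The pairing equivalence between `Fin m → Bool × Bool` and `Fin (m + m) → Bool`. -/
def CW.pairEquiv (m : ℕ) : (Fin m → Bool × Bool) ≃ (Fin (m + m) → Bool) :=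
  ((Equiv.arrowProdEquivProdArrow (Fin m) (fun _ => Bool) (fun _ => Bool)).trans
    (Equiv.sumArrowEquivProdArrow (Fin m) (Fin m) Bool).symm).trans
    (Equiv.arrowCongr finSumFinEquiv (Equiv.refl Bool))

lemma CW.pairEquiv_left (m : ℕ) (g : Fin m → Bool × Bool) (j : Fin m) :
    CW.pairEquiv m g (Fin.castAdd m j) = (g j).1 := by
  simp [CW.pairEquiv, Equiv.arrowCongr, Equiv.sumArrowEquivProdArrow,
    Equiv.arrowProdEquivProdArrow, ← finSumFinEquiv_apply_left]

lemma CW.pairEquiv_right (m : ℕ) (g : Fin m → Bool × Bool) (j : Fin m) :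
    CW.pairEquiv m g (Fin.natAdd m j) = (g j).2 := by
  have hj : Fin.natAdd m j = finSumFinEquiv (Sum.inr j) := by
    rw [finSumFinEquiv_apply_right]
  rw [hj]
  simp only [CW.pairEquiv, Equiv.trans_apply, Equiv.arrowCongr_apply, Equiv.symm_apply_apply,
    Equiv.coe_refl, Function.comp_apply, Equiv.sumArrowEquivProdArrow,
    Equiv.arrowProdEquivProdArrow, Equiv.coe_fn_symm_mk, Equiv.coe_fn_mk, Sum.elim_inr,
    Function.comp, id]

end Aux

set_option maxHeartbeats 1000000 in
/-- Gaussian–uniform representation of `O_{d,β,h}` for even `n`: with `Y` standard Gaussian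
and `U` uniform on `(-π, π)` independent of `Y`,
`O_{d,β,h} = 2^{n/2} E[(cosh(2√(2dβ/n) Y + 2h) + cos U)^{n/2}]`, where `O_{d,β,h}` is the
sum of the Boltzmann weights over configurations with
`∑_{i=1}^{n/2} σ_i - ∑_{i=n/2+1}^{n} σ_i = 0`. -/
theorem O_even_gaussian_representation (n d : ℕ) (hn : 2 ≤ n) (hne : Even n) (hd : 0 < d)
    (β h : ℝ) (hβ : 0 ≤ β)
    {Ω : Type*} [MeasurableSpace Ω] (P : Measure Ω) [IsProbabilityMeasure P]
    (Y U : Ω → ℝ) (hY : Measure.map Y P = gaussianReal 0 1)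
    (hU : Measure.map U P
      = (ENNReal.ofReal (2 * Real.pi))⁻¹ • volume.restrict (Set.Ioo (-Real.pi) Real.pi))
    (hind : IndepFun Y U P) :
    (∑ σ : Fin n → Bool,
        if (∑ i : Fin n, (if (i : ℕ) < n / 2 then spin (σ i) else -spin (σ i))) = 0 then
          cwWeight n d β h σ
        else 0)
      = 2 ^ (n / 2)
          * ∫ ω, (Real.cosh (2 * Real.sqrt (2 * d * β / n) * Y ω + 2 * h)
              + Real.cos (U ω)) ^ (n / 2) ∂P := by
  obtain ⟨m, rfl⟩ := hne
  have hm2 : (m + m) / 2 = m := by omega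
  have hNne : ((m + m : ℕ) : ℝ) ≠ 0 := by
    have : 0 < m + m := by omega
    positivity
  simp only [hm2]
  set c : ℝ := Real.sqrt (2 * (d : ℝ) * β / ((m + m : ℕ) : ℝ)) with hc_def
  have hcsq : c ^ 2 = 2 * (d : ℝ) * β / ((m + m : ℕ) : ℝ) := by
    rw [hc_def]
    exact Real.sq_sqrt (by positivity)
  -- measurability of Y and U
  have hYm : AEMeasurable Y P := aemeasurable_of_map_neZero (by
    constructor
    rw [hY]
    exact IsProbabilityMeasure.ne_zero _)
  have hUone : ((ENNReal.ofReal (2 * Real.pi))⁻¹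
      • volume.restrict (Set.Ioo (-Real.pi) Real.pi)) (Set.Ioo (-Real.pi) Real.pi) = 1 := by
    rw [Measure.smul_apply, Measure.restrict_apply measurableSet_Ioo, Set.inter_self,
      Real.volume_Ioo, show Real.pi - -Real.pi = 2 * Real.pi by ring, smul_eq_mul]
    exact ENNReal.inv_mul_cancel
      (ENNReal.ofReal_pos.mpr (by positivity)).ne' ENNReal.ofReal_ne_top
  have hUm : AEMeasurable U P := aemeasurable_of_map_neZero (by
    constructor
    intro h0
    rw [hU] at h0
    rw [h0] at hUone
    simp at hUone)
  -- integrability and integral computations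
  have hIntY : ∀ q : ℝ, Integrable (fun ω => Real.exp (q * Y ω)) P := by
    intro q
    have h0 := CW.integrable_exp_gauss q
    rw [← hY] at h0
    exact (integrable_map_measure (Continuous.aestronglyMeasurable (by fun_prop)) hYm).mp h0
  have hIntCalcY : ∀ q : ℝ, ∫ ω, Real.exp (q * Y ω) ∂P = Real.exp (q ^ 2 / 2) := by
    intro q
    have h0 := integral_map (φ := Y) (μ := P) hYm
      (f := fun x => Real.exp (q * x)) (Continuous.aestronglyMeasurable (by fun_prop))
    rw [hY] at h0
    rw [← h0, CW.integral_exp_gauss]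
  have hIntU : ∀ k : ℝ, Integrable (fun ω => Real.cos (k * U ω)) P := by
    intro k
    refine Integrable.mono' (integrable_const 1)
      (((by fun_prop : Measurable fun x : ℝ => Real.cos (k * x)).comp_aemeasurable
        hUm).aestronglyMeasurable)
      (Filter.Eventually.of_forall fun ω => by simpa using Real.abs_cos_le_one (k * U ω))
  have hIntCalcU : ∀ K : ℤ, ∫ ω, Real.cos ((K : ℝ) * U ω) ∂P = if K = 0 then 1 else 0 := by
    intro K
    have h0 := integral_map (φ := U) (μ := P) hUm
      (f := fun x => Real.cos ((K : ℝ) * x)) (Continuous.aestronglyMeasurable (by fun_prop))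
    rw [hU] at h0
    rw [← h0, CW.integral_cos_unif]
  have hIndep : ∀ q k : ℝ,
      IndepFun (fun ω => Real.exp (q * Y ω)) (fun ω => Real.cos (k * U ω)) P := by
    intro q k
    exact hind.comp (show Measurable fun x : ℝ => Real.exp (q * x) by fun_prop)
      (show Measurable fun x : ℝ => Real.cos (k * x) by fun_prop)
  -- spin sums through the pairing equivalence
  have hS : ∀ g : Fin m → Bool × Bool,
      (∑ j, spin (CW.pairEquiv m g j)) = ∑ j : Fin m, (spin (g j).1 + spin (g j).2) := by
    intro g
    rw [Fin.sum_univ_add (f := fun i : Fin (m + m) => spin (CW.pairEquiv m g i))]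
    simp only [CW.pairEquiv_left, CW.pairEquiv_right]
    rw [← Finset.sum_add_distrib]
  have hT : ∀ g : Fin m → Bool × Bool,
      (∑ i : Fin (m + m),
          if (i : ℕ) < m then spin (CW.pairEquiv m g i) else -spin (CW.pairEquiv m g i))
        = 2 * ((∑ j, CW.kk (g j) : ℤ) : ℝ) := by
    intro g
    rw [Fin.sum_univ_add (f := fun i : Fin (m + m) =>
      if (i : ℕ) < m then spin (CW.pairEquiv m g i) else -spin (CW.pairEquiv m g i))]
    have h1 : ∀ j : Fin m, ((Fin.castAdd m j : Fin (m + m)) : ℕ) < m := by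
      intro j; simpa using j.isLt
    have h2 : ∀ j : Fin m, ¬ ((Fin.natAdd m j : Fin (m + m)) : ℕ) < m := by
      intro j; simp [Fin.natAdd]
    rw [Finset.sum_congr rfl (fun j _ => if_pos (h1 j)),
      Finset.sum_congr rfl (fun j _ => if_neg (h2 j))]
    simp only [CW.pairEquiv_left, CW.pairEquiv_right]
    push_cast
    rw [Finset.mul_sum, ← Finset.sum_add_distrib]
    refine Finset.sum_congr rfl fun j _ => ?_
    have hsub := CW.spin_sub_spin (g j).1 (g j).2
    push_cast at hsub
    linarith
  -- transport the configuration sum through the pairing equivalence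
  rw [← Equiv.sum_comp (CW.pairEquiv m) (fun σ : Fin (m + m) → Bool =>
    if (∑ i : Fin (m + m), (if (i : ℕ) < m then spin (σ i) else -spin (σ i))) = 0 then
      cwWeight (m + m) d β h σ else 0)]
  have hterm : ∀ g : Fin m → Bool × Bool,
      (if (∑ i : Fin (m + m),
            (if (i : ℕ) < m then spin (CW.pairEquiv m g i) else -spin (CW.pairEquiv m g i))) = 0
        then cwWeight (m + m) d β h (CW.pairEquiv m g) else 0)
      = if (∑ j, CW.kk (g j)) = 0 then
          Real.exp ((d : ℝ) * β / ((m + m : ℕ) : ℝ)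
              * (∑ j : Fin m, (spin (g j).1 + spin (g j).2)) ^ 2
            + h * ∑ j : Fin m, (spin (g j).1 + spin (g j).2))
        else 0 := by
    intro g
    rw [hT g]
    have hcond : (2 * ((∑ j, CW.kk (g j) : ℤ) : ℝ) = 0) ↔ (∑ j, CW.kk (g j)) = 0 := by
      constructor
      · intro h0
        have : ((∑ j, CW.kk (g j) : ℤ) : ℝ) = 0 := by linarith
        exact_mod_cast this
      · intro h0
        rw [h0]
        norm_num
    by_cases hK : (∑ j, CW.kk (g j)) = 0
    · rw [if_pos (hcond.mpr hK), if_pos hK, cwWeight, hS g]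
    · rw [if_neg (fun hc => hK (hcond.mp hc)), if_neg hK]
  rw [Finset.sum_congr rfl (fun g _ => hterm g)]
  -- now handle the right-hand side
  have hpt : ∀ ω : Ω, (2 : ℝ) ^ m
        * (Real.cosh (2 * c * Y ω + 2 * h) + Real.cos (U ω)) ^ m
      = ∑ g : Fin m → Bool × Bool,
          Real.exp (h * ∑ j : Fin m, (spin (g j).1 + spin (g j).2))
            * (Real.exp ((c * ∑ j : Fin m, (spin (g j).1 + spin (g j).2)) * Y ω)
              * Real.cos (((∑ j, CW.kk (g j) : ℤ) : ℝ) * U ω)) := by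
    intro ω
    have h0 := CW.sum_id m (c * Y ω + h) (U ω)
    rw [show 2 * c * Y ω + 2 * h = 2 * (c * Y ω + h) by ring, ← mul_pow, mul_add, ← h0]
    refine Finset.sum_congr rfl fun g _ => ?_
    rw [show (c * Y ω + h) * ∑ j : Fin m, (spin (g j).1 + spin (g j).2)
        = h * (∑ j : Fin m, (spin (g j).1 + spin (g j).2))
          + (c * ∑ j : Fin m, (spin (g j).1 + spin (g j).2)) * Y ω by ring,
      Real.exp_add, mul_assoc]
  rw [← MeasureTheory.integral_const_mul]
  rw [integral_congr_ae (Filter.Eventually.of_forall hpt)]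
  rw [integral_finset_sum _ (fun g _ => ((hIndep
      (c * ∑ j : Fin m, (spin (g j).1 + spin (g j).2))
      (((∑ j, CW.kk (g j) : ℤ) : ℝ))).integrable_mul
        (hIntY _) (hIntU _)).const_mul _)]
  refine Finset.sum_congr rfl fun g _ => ?_
  rw [MeasureTheory.integral_const_mul,
    (hIndep (c * ∑ j : Fin m, (spin (g j).1 + spin (g j).2))
      (((∑ j, CW.kk (g j) : ℤ) : ℝ))).integral_fun_mul_eq_mul_integral
      (hIntY _).aestronglyMeasurable (hIntU _).aestronglyMeasurable,
    hIntCalcY, hIntCalcU (∑ j, CW.kk (g j))]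
  by_cases hK : (∑ j, CW.kk (g j)) = 0
  · rw [if_pos hK, if_pos hK, mul_one, ← Real.exp_add]
    congr 1
    rw [mul_pow, hcsq]
    field_simp
    ring
  · rw [if_neg hK, if_neg hK, mul_zero, mul_zero]
end

section
/- Let n be a positive odd integer, let d be a positive integer, β ≥ 0 and h real. Define O^{odd}_{d,β,h} = Σ_{σ ∈ {-1,1}^n : Σ_{i=1}^{(n−1)/2} σ_i − Σ_{i=(n+1)/2}^{n} σ_i = 1} exp((dβ/n)(Σ_{j=1}^n σ_j)² + h Σ_{j=1}^n σ_j). Let Y be a standard Gaussian random variable and U a random variable uniformly distributed on (−π, π), with Y and U independent. Then O^{odd}_{d,β,h} = 2^{(n−1)/2} E[(cosh(2√(2dβ/n) Y + 2h) + cos U)^{(n−1)/2} · (e^{−(√(2dβ/n) Y + h)} + e^{√(2dβ/n) Y + h} cos U)]. -/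
open Filter Asymptotics MeasureTheory ProbabilityTheory
open scoped BigOperators Classical

section AuxCW
open Real
open scoped NNReal

lemma exp_pair_mul (z w : ℂ) :
    (Complex.exp z + Complex.exp (-z)) * (Complex.exp w + Complex.exp (-w))
    = Complex.exp (z + w) + Complex.exp (z + -w) + Complex.exp (-z + w)
      + Complex.exp (-z + -w) := by
  rw [Complex.exp_add, Complex.exp_add, Complex.exp_add, Complex.exp_add]
  ring

lemma pairAB (t u : ℝ) :
    (Complex.exp ((t : ℂ) + Complex.I * (u / 2)) + Complex.exp (-((t : ℂ) + Complex.I * (u / 2)))) *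
      (Complex.exp ((t : ℂ) - Complex.I * (u / 2)) + Complex.exp (-((t : ℂ) - Complex.I * (u / 2))))
    = ((2 * Real.cosh (2 * t) + 2 * Real.cos u : ℝ) : ℂ) := by
  rw [exp_pair_mul]
  have h1 : ((t : ℂ) + Complex.I * (u / 2)) + ((t : ℂ) - Complex.I * (u / 2)) = ((2 * t : ℝ) : ℂ) := by
    push_cast; ring
  have h2 : ((t : ℂ) + Complex.I * (u / 2)) + -((t : ℂ) - Complex.I * (u / 2)) = (u : ℂ) * Complex.I := by
    push_cast; ring
  have h3 : -((t : ℂ) + Complex.I * (u / 2)) + ((t : ℂ) - Complex.I * (u / 2)) = ((-u : ℝ) : ℂ) * Complex.I := by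
    push_cast; ring
  have h4 : -((t : ℂ) + Complex.I * (u / 2)) + -((t : ℂ) - Complex.I * (u / 2)) = ((-(2 * t) : ℝ) : ℂ) := by
    push_cast; ring
  rw [h1, h2, h3, h4, Complex.exp_mul_I, Complex.exp_mul_I,
    ← Complex.ofReal_exp, ← Complex.ofReal_exp]
  push_cast [Real.cos_neg, Real.sin_neg, Real.cosh_eq]
  simp [Complex.sin_neg, Complex.cos_neg]
  ring

lemma pairB (t u : ℝ) :
    Complex.exp (-(Complex.I * (u / 2))) *
      (Complex.exp ((t : ℂ) - Complex.I * (u / 2)) + Complex.exp (-((t : ℂ) - Complex.I * (u / 2))))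
    = Complex.exp ((t : ℂ) - Complex.I * u) + Complex.exp (-(t : ℂ)) := by
  rw [mul_add, ← Complex.exp_add, ← Complex.exp_add]
  congr 2 <;> push_cast <;> ring

lemma stepA (n m : ℕ) (hnm : n = 2 * m + 1) (t u : ℝ) :
    ∑ σ : Fin n → Bool,
      Real.exp (t * ∑ j, spin (σ j)) *
        Real.cos (((∑ i : Fin n, (if (i : ℕ) < m then spin (σ i) else -spin (σ i))) - 1) * (u / 2))
    = 2 ^ m * (Real.cosh (2 * t) + Real.cos u) ^ m
        * (Real.exp (-t) + Real.exp t * Real.cos u) := by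
  classical
  set I := Complex.I with hI
  set z : ℂ := (t : ℂ) + I * (u / 2) with hz
  set w : ℂ := (t : ℂ) - I * (u / 2) with hw
  set A : ℂ := Complex.exp z + Complex.exp (-z) with hA
  set B : ℂ := Complex.exp w + Complex.exp (-w) with hB
  clear_value I z w A B
  -- complex sum
  have key : ∑ σ : Fin n → Bool,
      Complex.exp ((t : ℂ) * ((∑ j, spin (σ j) : ℝ) : ℂ)
        + I * (u / 2) * ((((∑ i : Fin n, (if (i : ℕ) < m then spin (σ i) else -spin (σ i))) : ℝ) : ℂ) - 1))
      = Complex.exp (-(I * (u / 2))) * (A ^ m * B ^ (m + 1)) := by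
    have expand : ∀ σ : Fin n → Bool,
        Complex.exp ((t : ℂ) * ((∑ j, spin (σ j) : ℝ) : ℂ)
          + I * (u / 2) * ((((∑ i : Fin n, (if (i : ℕ) < m then spin (σ i) else -spin (σ i))) : ℝ) : ℂ) - 1))
        = Complex.exp (-(I * (u / 2))) *
            ∏ i : Fin n, Complex.exp (((t : ℂ) + I * (u / 2) * (if (i : ℕ) < m then 1 else -1)) * ((spin (σ i) : ℝ) : ℂ)) := by
      intro σ
      rw [← Complex.exp_sum, ← Complex.exp_add]
      congr 1
      have cast1 : ((∑ j, spin (σ j) : ℝ) : ℂ) = ∑ j, ((spin (σ j) : ℝ) : ℂ) := by push_cast; rfl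
      have cast2 : (((∑ i : Fin n, (if (i : ℕ) < m then spin (σ i) else -spin (σ i))) : ℝ) : ℂ)
          = ∑ i : Fin n, (if (i : ℕ) < m then ((spin (σ i) : ℝ) : ℂ) else -((spin (σ i) : ℝ) : ℂ)) := by
        push_cast
        exact Finset.sum_congr rfl (fun i _ => by split <;> simp)
      have hterm : ∀ i : Fin n, ((t : ℂ) + I * (u / 2) * (if (i : ℕ) < m then 1 else -1)) * ((spin (σ i) : ℝ) : ℂ)
          = (t : ℂ) * ((spin (σ i) : ℝ) : ℂ)
            + I * (u / 2) * (if (i : ℕ) < m then ((spin (σ i) : ℝ) : ℂ) else -((spin (σ i) : ℝ) : ℂ)) := by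
        intro i; by_cases hi : (i : ℕ) < m <;> simp only [hi, if_true, if_false] <;> ring
      rw [Finset.sum_congr rfl (fun i _ => hterm i), Finset.sum_add_distrib,
        ← Finset.mul_sum, ← Finset.mul_sum, cast1, cast2]
      ring
    rw [Finset.sum_congr rfl (fun σ _ => expand σ), ← Finset.mul_sum]
    congr 1
    rw [← Fintype.prod_sum (fun (i : Fin n) (b : Bool) =>
      Complex.exp (((t : ℂ) + I * (u / 2) * (if (i : ℕ) < m then 1 else -1)) * ((spin b : ℝ) : ℂ)))]
    have hfac : ∀ i : Fin n,
        (∑ b : Bool, Complex.exp (((t : ℂ) + I * (u / 2) * (if (i : ℕ) < m then 1 else -1)) * ((spin b : ℝ) : ℂ)))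
        = if (i : ℕ) < m then A else B := by
      intro i
      rw [Fintype.sum_bool]
      by_cases hi : (i : ℕ) < m
      · have e1 : ((t : ℂ) + I * (u / 2) * 1) * ((spin true : ℝ) : ℂ) = z := by
          simp [spin, hz]
        have e2 : ((t : ℂ) + I * (u / 2) * 1) * ((spin false : ℝ) : ℂ) = -z := by
          simp [spin, hz]; try ring
        simp only [hi, if_true]
        rw [e1, e2, hA]
      · have e1 : ((t : ℂ) + I * (u / 2) * (-1)) * ((spin true : ℝ) : ℂ) = w := by
          simp [spin, hw]; try ring
        have e2 : ((t : ℂ) + I * (u / 2) * (-1)) * ((spin false : ℝ) : ℂ) = -w := by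
          simp [spin, hw]; try ring
        simp only [hi, if_false]
        rw [e1, e2, hB]
    rw [Finset.prod_congr rfl (fun i _ => hfac i), Finset.prod_ite, Finset.prod_const,
      Finset.prod_const]
    have hmn : m < n := by omega
    have hcard : (Finset.univ.filter fun i : Fin n => (i : ℕ) < m).card = m := by
      have : (Finset.univ.filter fun i : Fin n => (i : ℕ) < m) = Finset.Iio (⟨m, hmn⟩ : Fin n) := by
        ext i; simp [Fin.lt_def]
      rw [this, Fin.card_Iio]
    have hcard2 : (Finset.univ.filter fun i : Fin n => ¬ (i : ℕ) < m).card = m + 1 := by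
      have := Finset.card_filter_add_card_filter_not (s := (Finset.univ : Finset (Fin n)))
        (p := fun i : Fin n => (i : ℕ) < m)
      simp only [Finset.card_univ, Fintype.card_fin] at this
      omega
    rw [hcard, hcard2]
  -- evaluate products
  have hAB : A * B = (((2 * Real.cosh (2 * t) + 2 * Real.cos u : ℝ)) : ℂ) := by
    rw [hA, hB, hz, hw, hI]
    exact pairAB t u
  have hBe : Complex.exp (-(I * (u / 2))) * B
      = Complex.exp ((t : ℂ) - I * u) + Complex.exp (-(t : ℂ)) := by
    rw [hB, hw, hI]
    exact pairB t u
  have hre : ∀ σ : Fin n → Bool,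
      Real.exp (t * ∑ j, spin (σ j)) *
        Real.cos (((∑ i : Fin n, (if (i : ℕ) < m then spin (σ i) else -spin (σ i))) - 1) * (u / 2))
      = (Complex.exp ((t : ℂ) * ((∑ j, spin (σ j) : ℝ) : ℂ)
          + I * (u / 2) * ((((∑ i : Fin n, (if (i : ℕ) < m then spin (σ i) else -spin (σ i))) : ℝ) : ℂ) - 1))).re := by
    intro σ
    rw [Complex.exp_re]
    have hre1 : ((t : ℂ) * ((∑ j, spin (σ j) : ℝ) : ℂ)
        + I * (u / 2) * ((((∑ i : Fin n, (if (i : ℕ) < m then spin (σ i) else -spin (σ i))) : ℝ) : ℂ) - 1)).re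
        = t * ∑ j, spin (σ j) := by
      simp [hI]
    have hre2 : ((t : ℂ) * ((∑ j, spin (σ j) : ℝ) : ℂ)
        + I * (u / 2) * ((((∑ i : Fin n, (if (i : ℕ) < m then spin (σ i) else -spin (σ i))) : ℝ) : ℂ) - 1)).im
        = ((∑ i : Fin n, (if (i : ℕ) < m then spin (σ i) else -spin (σ i))) - 1) * (u / 2) := by
      simp [hI]
      ring
    rw [hre1, hre2]
  rw [Finset.sum_congr rfl (fun σ _ => hre σ), ← Complex.re_sum, key]
  have hfinal : Complex.exp (-(I * (u / 2))) * (A ^ m * B ^ (m + 1))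
      = (((2 * Real.cosh (2 * t) + 2 * Real.cos u : ℝ) ^ m : ℝ) : ℂ)
        * (Complex.exp ((t : ℂ) - I * u) + Complex.exp (-(t : ℂ))) := by
    have : Complex.exp (-(I * (u / 2))) * (A ^ m * B ^ (m + 1))
        = (A * B) ^ m * (Complex.exp (-(I * (u / 2))) * B) := by
      rw [mul_pow, pow_succ]; ring
    rw [this, hAB, hBe, Complex.ofReal_pow]
  rw [hfinal, Complex.re_ofReal_mul]
  have he1 : (Complex.exp ((t : ℂ) - I * u)).re = Real.exp t * Real.cos u := by
    rw [Complex.exp_re]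
    have h1 : ((t : ℂ) - I * u).re = t := by simp [hI]
    have h2 : ((t : ℂ) - I * u).im = -u := by simp [hI]
    rw [h1, h2, Real.cos_neg]
  have he2 : (Complex.exp (-(t : ℂ))).re = Real.exp (-t) := by
    rw [← Complex.ofReal_neg, ← Complex.ofReal_exp, Complex.ofReal_re]
  rw [Complex.add_re, he1, he2]
  have : (2 * Real.cosh (2 * t) + 2 * Real.cos u) ^ m
      = 2 ^ m * (Real.cosh (2 * t) + Real.cos u) ^ m := by
    rw [← mul_pow]; ring_nf
  rw [this]
  ring

lemma gauss_pdf_eq (x : ℝ) :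
    gaussianPDFReal 0 1 x = (Real.sqrt (2 * π))⁻¹ * Real.exp (-x ^ 2 / 2) := by
  simp [gaussianPDFReal]

lemma gauss_shift (a x : ℝ) :
    Real.exp (a * x) * gaussianPDFReal 0 1 x
      = (Real.sqrt (2 * π))⁻¹ * Real.exp (a ^ 2 / 2) * Real.exp (-(1/2) * (x - a) ^ 2) := by
  have h1 : Real.exp (a * x) * ((Real.sqrt (2 * π))⁻¹ * Real.exp (-x ^ 2 / 2))
      = (Real.sqrt (2 * π))⁻¹ * Real.exp (-x ^ 2 / 2 + a * x) := by
    rw [Real.exp_add]; ring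
  rw [gauss_pdf_eq, h1, mul_assoc, ← Real.exp_add]
  congr 1
  ring

lemma integrable_gauss_exp (a : ℝ) :
    Integrable (fun x => Real.exp (a * x)) (gaussianReal 0 1) := by
  rw [gaussianReal_of_var_ne_zero 0 one_ne_zero]
  rw [integrable_withDensity_iff (measurable_gaussianPDF 0 1)
    (Filter.Eventually.of_forall fun x => ENNReal.ofReal_lt_top)]
  have heq : ∀ x : ℝ, Real.exp (a * x) * (gaussianPDF 0 1 x).toReal
      = (Real.sqrt (2 * π))⁻¹ * Real.exp (a ^ 2 / 2) * Real.exp (-(1/2) * (x - a) ^ 2) := by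
    intro x
    rw [gaussianPDF, ENNReal.toReal_ofReal (gaussianPDFReal_nonneg 0 1 x), gauss_shift]
  simp only [heq]
  exact ((integrable_exp_neg_mul_sq (by norm_num : (0:ℝ) < 1/2)).comp_sub_right a).const_mul _

lemma integral_gauss_exp (a : ℝ) :
    ∫ x, Real.exp (a * x) ∂(gaussianReal 0 1) = Real.exp (a ^ 2 / 2) := by
  rw [gaussianReal_of_var_ne_zero 0 one_ne_zero]
  have hpdf : (gaussianPDF 0 1) = fun x => ((Real.toNNReal (gaussianPDFReal 0 1 x) : ℝ≥0) : ENNReal) := by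
    funext x; rfl
  rw [hpdf, integral_withDensity_eq_integral_smul
    (measurable_gaussianPDFReal 0 1).real_toNNReal]
  have heq : ∀ x : ℝ, (Real.toNNReal (gaussianPDFReal 0 1 x)) • Real.exp (a * x)
      = (Real.sqrt (2 * π))⁻¹ * Real.exp (a ^ 2 / 2) * Real.exp (-(1/2) * (x - a) ^ 2) := by
    intro x
    rw [NNReal.smul_def, smul_eq_mul, Real.coe_toNNReal _ (gaussianPDFReal_nonneg 0 1 x),
      mul_comm, gauss_shift]
  simp only [heq]
  rw [integral_const_mul, integral_sub_right_eq_self (μ := volume) (fun x => Real.exp (-(1/2) * x ^ 2)) a]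
  rw [integral_gaussian]
  have : √(π / (1/2)) = √(2 * π) := by norm_num [mul_comm]
  rw [this]
  field_simp

variable {Ω : Type*} [MeasurableSpace Ω] (P : Measure Ω) [IsProbabilityMeasure P]

lemma unif_neZero :
    ((ENNReal.ofReal (2 * Real.pi))⁻¹ • volume.restrict (Set.Ioo (-Real.pi) Real.pi)
      : Measure ℝ) ≠ 0 := by
  intro hcontra
  have h1 : ((ENNReal.ofReal (2 * Real.pi))⁻¹ • volume.restrict (Set.Ioo (-Real.pi) Real.pi)
      : Measure ℝ) (Set.Ioo (-Real.pi) Real.pi) = 0 := by rw [hcontra]; rfl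
  rw [Measure.smul_apply, Measure.restrict_apply measurableSet_Ioo, Set.inter_self,
    Real.volume_Ioo] at h1
  have hπ : (0:ℝ) < Real.pi := Real.pi_pos
  simp only [smul_eq_mul] at h1
  rw [mul_eq_zero] at h1
  rcases h1 with h1 | h1
  · rw [ENNReal.inv_eq_zero] at h1
    exact ENNReal.ofReal_ne_top h1
  · rw [ENNReal.ofReal_eq_zero] at h1
    nlinarith
lemma unif_cos (U : Ω → ℝ)
    (hU : Measure.map U P
      = (ENNReal.ofReal (2 * Real.pi))⁻¹ • volume.restrict (Set.Ioo (-Real.pi) Real.pi))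
    (k : ℤ) :
    ∫ ω, Real.cos (k * U ω) ∂P = if k = 0 then 1 else 0 := by
  have hUm : AEMeasurable U P := by
    apply aemeasurable_of_map_neZero
    rw [hU]
    exact ⟨unif_neZero⟩
  have hsm : StronglyMeasurable fun x : ℝ => Real.cos (k * x) :=
    (Real.continuous_cos.comp (continuous_const.mul continuous_id)).stronglyMeasurable
  calc ∫ ω, Real.cos (k * U ω) ∂P
      = ∫ x, Real.cos (k * x) ∂(Measure.map U P) :=
        (integral_map hUm hsm.aestronglyMeasurable).symm
    _ = ((ENNReal.ofReal (2 * Real.pi))⁻¹).toReal • ∫ x in Set.Ioo (-Real.pi) Real.pi, Real.cos (k * x) := by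
        rw [hU, integral_smul_measure]
    _ = if k = 0 then 1 else 0 := by
        have hπ : (0:ℝ) < Real.pi := Real.pi_pos
        have htr : ((ENNReal.ofReal (2 * Real.pi))⁻¹).toReal = (2 * Real.pi)⁻¹ := by
          rw [ENNReal.toReal_inv, ENNReal.toReal_ofReal (by positivity)]
        have hIoo : ∫ x in Set.Ioo (-Real.pi) Real.pi, Real.cos (k * x)
            = ∫ x in (-Real.pi)..Real.pi, Real.cos (k * x) := by
          rw [intervalIntegral.integral_of_le (by linarith), integral_Ioc_eq_integral_Ioo]
        rw [htr, hIoo]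
        by_cases hk : k = 0
        · subst hk
          simp only [Int.cast_zero, zero_mul, Real.cos_zero, if_true]
          rw [intervalIntegral.integral_const]
          simp
          try field_simp
          try ring
        · have hkR : (k : ℝ) ≠ 0 := Int.cast_ne_zero.mpr hk
          rw [intervalIntegral.integral_comp_mul_left (fun x => Real.cos x) hkR]
          rw [integral_cos]
          have hs1 : Real.sin ((k : ℝ) * Real.pi) = 0 := Real.sin_int_mul_pi k
          have hs2 : Real.sin ((k : ℝ) * (-Real.pi)) = 0 := by
            rw [mul_neg, Real.sin_neg, hs1, neg_zero]
          rw [hs1, hs2, if_neg hk]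
          simp


lemma gauss_exp_expectation {Ω : Type*} [MeasurableSpace Ω] (P : Measure Ω)
    (Y : Ω → ℝ) (hY : Measure.map Y P = gaussianReal 0 1) (a : ℝ) :
    ∫ ω, Real.exp (a * Y ω) ∂P = Real.exp (a ^ 2 / 2) := by
  have hYm : AEMeasurable Y P := aemeasurable_of_map_neZero (by rw [hY]; infer_instance)
  have hcont : Continuous fun x : ℝ => Real.exp (a * x) :=
    Real.continuous_exp.comp (continuous_const.mul continuous_id)
  rw [← integral_gauss_exp a, ← hY, integral_map hYm hcont.aestronglyMeasurable]

lemma gauss_exp_integrable {Ω : Type*} [MeasurableSpace Ω] (P : Measure Ω)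
    (Y : Ω → ℝ) (hY : Measure.map Y P = gaussianReal 0 1) (a : ℝ) :
    Integrable (fun ω => Real.exp (a * Y ω)) P := by
  have hYm : AEMeasurable Y P := aemeasurable_of_map_neZero (by rw [hY]; infer_instance)
  have hcont : Continuous fun x : ℝ => Real.exp (a * x) :=
    Real.continuous_exp.comp (continuous_const.mul continuous_id)
  have h := integrable_gauss_exp a
  rw [← hY] at h
  exact (integrable_map_measure hcont.aestronglyMeasurable hYm).mp h

end AuxCW

/-- Gaussian–uniform representation of `O^{odd}_{d,β,h}` for odd `n`: with `Y` standard
Gaussian and `U` uniform on `(-π, π)` independent of `Y`,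
`O^{odd}_{d,β,h} = 2^{(n-1)/2} E[(cosh(2√(2dβ/n) Y + 2h) + cos U)^{(n-1)/2}`
`· (e^{-(√(2dβ/n) Y + h)} + e^{√(2dβ/n) Y + h} cos U)]`, where `O^{odd}_{d,β,h}` is the sum
of the Boltzmann weights over configurations with
`∑_{i=1}^{(n-1)/2} σ_i - ∑_{i=(n+1)/2}^{n} σ_i = 1`. -/
theorem O_odd_gaussian_representation (n d : ℕ) (hn : 0 < n) (hno : Odd n) (hd : 0 < d)
    (β h : ℝ) (hβ : 0 ≤ β)
    {Ω : Type*} [MeasurableSpace Ω] (P : Measure Ω) [IsProbabilityMeasure P]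
    (Y U : Ω → ℝ) (hY : Measure.map Y P = gaussianReal 0 1)
    (hU : Measure.map U P
      = (ENNReal.ofReal (2 * Real.pi))⁻¹ • volume.restrict (Set.Ioo (-Real.pi) Real.pi))
    (hind : IndepFun Y U P) :
    (∑ σ : Fin n → Bool,
        if (∑ i : Fin n, (if (i : ℕ) < (n - 1) / 2 then spin (σ i) else -spin (σ i))) = 1 then
          cwWeight n d β h σ
        else 0)
      = 2 ^ ((n - 1) / 2)
          * ∫ ω, (Real.cosh (2 * Real.sqrt (2 * d * β / n) * Y ω + 2 * h)
                + Real.cos (U ω)) ^ ((n - 1) / 2)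
              * (Real.exp (-(Real.sqrt (2 * d * β / n) * Y ω + h))
                  + Real.exp (Real.sqrt (2 * d * β / n) * Y ω + h) * Real.cos (U ω)) ∂P := by
  classical
  obtain ⟨m, hmm⟩ := hno
  have hm' : n = 2 * m + 1 := by omega
  have hm2 : (n - 1) / 2 = m := by omega
  rw [hm2]
  set c : ℝ := Real.sqrt (2 * d * β / n) with hc
  have hc2 : c ^ 2 = 2 * d * β / n := by
    rw [hc, Real.sq_sqrt (by positivity)]
  have hYm : AEMeasurable Y P := aemeasurable_of_map_neZero (by rw [hY]; infer_instance)
  have hUm : AEMeasurable U P := aemeasurable_of_map_neZero (by rw [hU]; exact ⟨unif_neZero⟩)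
  -- integer version of the constrained sum and its parity
  have hcast : ∀ σ : Fin n → Bool,
      ((∑ i : Fin n, (if (i : ℕ) < m then (if σ i then (1:ℤ) else -1) else (if σ i then -1 else 1)) : ℤ) : ℝ)
        = ∑ i : Fin n, (if (i : ℕ) < m then spin (σ i) else -spin (σ i)) := by
    intro σ
    push_cast
    refine Finset.sum_congr rfl fun i _ => ?_
    by_cases hi : (i : ℕ) < m <;> cases hσ : σ i <;> simp [hi, hσ, spin]
  have hodd : ∀ σ : Fin n → Bool,
      Odd (∑ i : Fin n, (if (i : ℕ) < m then (if σ i then (1:ℤ) else -1) else (if σ i then -1 else 1))) := by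
    intro σ
    have h2 : (((∑ i : Fin n, (if (i : ℕ) < m then (if σ i then (1:ℤ) else -1) else (if σ i then -1 else 1)) : ℤ)) : ZMod 2) = 1 := by
      push_cast
      have hterm : ∀ i : Fin n, ((if (i : ℕ) < m then (if σ i then (1 : ZMod 2) else -1)
          else (if σ i then -1 else 1))) = 1 := by
        intro i
        by_cases hi : (i : ℕ) < m <;> cases hσ : σ i <;> simp [hi, hσ] <;> decide
      rw [Finset.sum_congr rfl fun i _ => hterm i, Finset.sum_const, Finset.card_univ,
        Fintype.card_fin, hm']
      calc ((2 * m + 1 : ℕ) • (1 : ZMod 2)) = ((2 * m + 1 : ℕ) : ZMod 2) := by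
            rw [nsmul_eq_mul, mul_one]
        _ = 2 * (m : ZMod 2) + 1 := by push_cast; ring
        _ = 1 := by rw [show (2 : ZMod 2) = 0 from rfl]; ring
    rw [← Int.not_even_iff_odd]
    intro he
    have hdvd : ((2:ℕ) : ℤ) ∣ (∑ i : Fin n, (if (i : ℕ) < m then (if σ i then (1:ℤ) else -1) else (if σ i then -1 else 1))) := by
      exact_mod_cast even_iff_two_dvd.mp he
    rw [← ZMod.intCast_zmod_eq_zero_iff_dvd] at hdvd
    rw [h2] at hdvd
    exact one_ne_zero hdvd
  -- per-configuration expectation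
  have hσint : ∀ σ : Fin n → Bool,
      ∫ ω, Real.exp ((c * Y ω + h) * ∑ j, spin (σ j)) *
        Real.cos (((∑ i : Fin n, (if (i : ℕ) < m then spin (σ i) else -spin (σ i))) - 1) * (U ω / 2)) ∂P
      = (if (∑ i : Fin n, (if (i : ℕ) < m then spin (σ i) else -spin (σ i))) = 1 then
          cwWeight n d β h σ else 0) := by
    intro σ
    obtain ⟨j, hj⟩ := hodd σ
    have hTj : (∑ i : Fin n, (if (i : ℕ) < m then (if σ i then (1:ℤ) else -1) else (if σ i then -1 else 1)))
        = 2 * j + 1 := hj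
    have harg : ∀ u : ℝ,
        ((∑ i : Fin n, (if (i : ℕ) < m then spin (σ i) else -spin (σ i))) - 1) * (u / 2)
        = (j : ℝ) * u := by
      intro u
      rw [← hcast σ, hTj]
      push_cast
      ring
    have hexpand : ∀ ω, Real.exp ((c * Y ω + h) * ∑ i, spin (σ i)) *
        Real.cos (((∑ i : Fin n, (if (i : ℕ) < m then spin (σ i) else -spin (σ i))) - 1) * (U ω / 2))
        = Real.exp (h * ∑ i, spin (σ i)) *
            (Real.exp ((c * ∑ i, spin (σ i)) * Y ω) * Real.cos ((j : ℝ) * U ω)) := by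
      intro ω
      rw [harg (U ω), ← mul_assoc, ← Real.exp_add]
      congr 2
      ring
    rw [integral_congr_ae (Filter.Eventually.of_forall hexpand), integral_const_mul]
    have hφ : Measurable fun x : ℝ => Real.exp ((c * ∑ i, spin (σ i)) * x) :=
      (Real.continuous_exp.comp (continuous_const.mul continuous_id)).measurable
    have hψ : Measurable fun x : ℝ => Real.cos ((j : ℝ) * x) :=
      (Real.continuous_cos.comp (continuous_const.mul continuous_id)).measurable
    have hindc : IndepFun (fun ω => Real.exp ((c * ∑ i, spin (σ i)) * Y ω))
        (fun ω => Real.cos ((j : ℝ) * U ω)) P := hind.comp hφ hψ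
    have hmul : ∫ ω, Real.exp ((c * ∑ i, spin (σ i)) * Y ω) * Real.cos ((j : ℝ) * U ω) ∂P
        = (∫ ω, Real.exp ((c * ∑ i, spin (σ i)) * Y ω) ∂P) * ∫ ω, Real.cos ((j : ℝ) * U ω) ∂P :=
      hindc.integral_mul_eq_mul_integral ((hφ.comp_aemeasurable hYm).aestronglyMeasurable)
        ((hψ.comp_aemeasurable hUm).aestronglyMeasurable)
    rw [hmul, gauss_exp_expectation P Y hY, unif_cos P U hU j]
    by_cases hT : (∑ i : Fin n, (if (i : ℕ) < m then spin (σ i) else -spin (σ i))) = 1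
    · have hj0 : j = 0 := by
        have h1 : ((2 * j + 1 : ℤ) : ℝ) = 1 := by rw [← hTj, hcast σ, hT]
        have : (2 * j + 1 : ℤ) = 1 := by exact_mod_cast h1
        omega
      rw [if_pos hT, if_pos hj0, mul_one, ← Real.exp_add, cwWeight]
      congr 1
      rw [mul_pow, hc2]
      ring
    · have hj0 : j ≠ 0 := by
        intro hcon
        apply hT
        rw [← hcast σ, hTj, hcon]
        norm_num
      rw [if_neg hT, if_neg hj0]
      simp
  -- integrability of each summand
  have hint : ∀ σ : Fin n → Bool,
      Integrable (fun ω => Real.exp ((c * Y ω + h) * ∑ j, spin (σ j)) *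
        Real.cos (((∑ i : Fin n, (if (i : ℕ) < m then spin (σ i) else -spin (σ i))) - 1) * (U ω / 2))) P := by
    intro σ
    have hg : Integrable (fun ω => Real.exp ((c * ∑ i, spin (σ i)) * Y ω)) P :=
      gauss_exp_integrable P Y hY (c * ∑ i, spin (σ i))
    have hψ : Measurable fun x : ℝ =>
        Real.cos (((∑ i : Fin n, (if (i : ℕ) < m then spin (σ i) else -spin (σ i))) - 1) * (x / 2)) := by
      fun_prop
    have hbig : Integrable (fun ω =>
        Real.cos (((∑ i : Fin n, (if (i : ℕ) < m then spin (σ i) else -spin (σ i))) - 1) * (U ω / 2))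
          * Real.exp ((c * ∑ i, spin (σ i)) * Y ω)) P := by
      apply hg.bdd_mul (c := 1) ((hψ.comp_aemeasurable hUm).aestronglyMeasurable)
      exact Filter.Eventually.of_forall fun ω => by simpa using Real.abs_cos_le_one _
    refine (hbig.const_mul (Real.exp (h * ∑ i, spin (σ i)))).congr
      (Filter.Eventually.of_forall fun ω => ?_)
    have hee : Real.exp (h * ∑ i, spin (σ i)) * Real.exp ((c * ∑ i, spin (σ i)) * Y ω)
        = Real.exp ((c * Y ω + h) * ∑ i, spin (σ i)) := by
      rw [← Real.exp_add]
      congr 1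
      ring
    calc Real.exp (h * ∑ i, spin (σ i)) *
          (Real.cos (((∑ i : Fin n, (if (i : ℕ) < m then spin (σ i) else -spin (σ i))) - 1) * (U ω / 2))
            * Real.exp ((c * ∑ i, spin (σ i)) * Y ω))
        = (Real.exp (h * ∑ i, spin (σ i)) * Real.exp ((c * ∑ i, spin (σ i)) * Y ω)) *
            Real.cos (((∑ i : Fin n, (if (i : ℕ) < m then spin (σ i) else -spin (σ i))) - 1) * (U ω / 2)) := by
          ring
      _ = _ := by rw [hee]
  -- pointwise application of the deterministic identity
  have hpt : ∀ ω, (2:ℝ) ^ m *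
      ((Real.cosh (2 * c * Y ω + 2 * h) + Real.cos (U ω)) ^ m
        * (Real.exp (-(c * Y ω + h)) + Real.exp (c * Y ω + h) * Real.cos (U ω)))
      = ∑ σ : Fin n → Bool,
          Real.exp ((c * Y ω + h) * ∑ j, spin (σ j)) *
            Real.cos (((∑ i : Fin n, (if (i : ℕ) < m then spin (σ i) else -spin (σ i))) - 1) * (U ω / 2)) := by
    intro ω
    rw [stepA n m hm' (c * Y ω + h) (U ω)]
    have harg : 2 * (c * Y ω + h) = 2 * c * Y ω + 2 * h := by ring
    rw [harg]
    ring
  rw [← integral_const_mul]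
  rw [integral_congr_ae (Filter.Eventually.of_forall hpt)]
  rw [integral_finset_sum Finset.univ (fun σ _ => hint σ)]
  exact Finset.sum_congr rfl fun σ _ => (hσint σ).symm
end

section
/- Let n ≥ 1 and let ε = (ε_1, …, ε_n) be an exchangeable random vector with values in {-1,1}^n (that is, its law is invariant under every permutation of the coordinates). Then sup_{x∈ℝ} sup_{v_1,…,v_n ≥ 1} P(Σ_{i=1}^n v_i ε_i ∈ (x−1, x+1)) = sup_{x∈ℝ} P(ε_1 + ε_2 + ⋯ + ε_n ∈ (x−1, x+1)) = sup_{x∈ℝ} P(ε_1 + ε_2 + ⋯ + ε_n = x). -/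
open Filter
open scoped BigOperators Classical

section Aux

variable {n : ℕ} (w : (Fin n → Bool) → ℝ)

private noncomputable def boolFinsetEquivPLO (n : ℕ) : Finset (Fin n) ≃ (Fin n → Bool) where
  toFun s := fun i => decide (i ∈ s)
  invFun σ := Finset.univ.filter (fun i => σ i = true)
  left_inv s := by ext i; simp
  right_inv σ := by funext i; by_cases h : σ i = true <;> simp [h]

private lemma sum_bool_finsetPLO (g : (Fin n → Bool) → ℝ) :
    ∑ σ : Fin n → Bool, g σ = ∑ s : Finset (Fin n), g (fun i => decide (i ∈ s)) :=
  (Equiv.sum_comp (boolFinsetEquivPLO n) g).symm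

private lemma filter_decide_memPLO (s : Finset (Fin n)) :
    Finset.univ.filter (fun i => decide (i ∈ s) = true) = s := by ext i; simp

private lemma sum_spinPLO (σ : Fin n → Bool) :
    ∑ i, spin (σ i)
      = 2 * ((Finset.univ.filter (fun i => σ i = true)).card : ℝ) - n := by
  classical
  rw [← Finset.sum_filter_add_sum_filter_not Finset.univ (fun i => σ i = true)]
  have h1 : ∑ i ∈ Finset.univ.filter (fun i => σ i = true), spin (σ i)
      = ((Finset.univ.filter (fun i => σ i = true)).card : ℝ) := by
    have : ∑ i ∈ Finset.univ.filter (fun i => σ i = true), spin (σ i)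
        = ∑ _i ∈ Finset.univ.filter (fun i => σ i = true), (1 : ℝ) :=
      Finset.sum_congr rfl (fun i hi => by
        simp only [Finset.mem_filter] at hi; simp [spin, hi.2])
    rw [this]; simp
  have h2 : ∑ i ∈ Finset.univ.filter (fun i => ¬ σ i = true), spin (σ i)
      = -((Finset.univ.filter (fun i => ¬ σ i = true)).card : ℝ) := by
    have : ∑ i ∈ Finset.univ.filter (fun i => ¬ σ i = true), spin (σ i)
        = ∑ _i ∈ Finset.univ.filter (fun i => ¬ σ i = true), (-1 : ℝ) :=
      Finset.sum_congr rfl (fun i hi => by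
        simp only [Finset.mem_filter, Bool.not_eq_true] at hi; simp [spin, hi.2])
    rw [this]; simp
  have h3 := Finset.card_filter_add_card_filter_not
      (s := (Finset.univ : Finset (Fin n))) (p := fun i => σ i = true)
  rw [Finset.card_univ, Fintype.card_fin] at h3
  rw [h1, h2]
  have h4 : ((Finset.univ.filter (fun i => ¬ σ i = true)).card : ℝ)
      = n - ((Finset.univ.filter (fun i => σ i = true)).card : ℝ) := by
    have := congrArg (fun k : ℕ => (k : ℝ)) h3
    push_cast at this ⊢
    linarith
  rw [h4]; ring

private lemma w_card_eqPLO
    (hex : ∀ π : Equiv.Perm (Fin n), ∀ σ : Fin n → Bool, w (σ ∘ π) = w σ)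
    (σ τ : Fin n → Bool)
    (h : (Finset.univ.filter (fun i => σ i = true)).card
       = (Finset.univ.filter (fun i => τ i = true)).card) :
    w σ = w τ := by
  have hc : Fintype.card {x // τ x = true} = Fintype.card {x // σ x = true} := by
    simp only [Fintype.card_subtype]
    exact h.symm
  have hc' : Fintype.card {x // ¬ τ x = true} = Fintype.card {x // ¬ σ x = true} := by
    simp only [Fintype.card_subtype_compl, hc]
  let e := Fintype.equivOfCardEq hc
  let e' := Fintype.equivOfCardEq hc'
  let π : Equiv.Perm (Fin n) :=
    ((Equiv.sumCompl (fun x => τ x = true)).symm.trans ((e.sumCongr e').trans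
      (Equiv.sumCompl (fun x => σ x = true))))
  have hπ : σ ∘ π = τ := by
    funext x
    by_cases hx : τ x = true
    · have hπx : π x = (e ⟨x, hx⟩ : {x // σ x = true}).1 := by
        show (Equiv.sumCompl _) (Sum.map _ _ ((Equiv.sumCompl _).symm x)) = _
        rw [Equiv.sumCompl_symm_apply_of_pos (p := fun y => τ y = true) (a := x) hx]; simp
      rw [Function.comp_apply, hπx, (e ⟨x, hx⟩).2, hx]
    · have hπx : π x = (e' ⟨x, hx⟩ : {x // ¬ σ x = true}).1 := by
        show (Equiv.sumCompl _) (Sum.map _ _ ((Equiv.sumCompl _).symm x)) = _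
        rw [Equiv.sumCompl_symm_apply_of_neg (p := fun y => τ y = true) (a := x) hx]; simp
      rw [Function.comp_apply, hπx]
      have h2 := (e' ⟨x, hx⟩).2
      simp only [Bool.not_eq_true] at h2 hx
      rw [h2, hx]
  calc w σ = w (σ ∘ π) := (hex π σ).symm
  _ = w τ := by rw [hπ]

private lemma sum_if_le_onePLO (hw0 : ∀ σ, 0 ≤ w σ)
    (hw1 : ∑ σ : Fin n → Bool, w σ = 1) (P : (Fin n → Bool) → Prop)
    [∀ σ, Decidable (P σ)] :
    (∑ σ : Fin n → Bool, if P σ then w σ else 0) ≤ 1 := by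
  rw [← hw1]
  exact Finset.sum_le_sum fun σ _ => by split <;> simp [hw0 σ]

private lemma sum_if_nonnegPLO (hw0 : ∀ σ, 0 ≤ w σ) (P : (Fin n → Bool) → Prop)
    [∀ σ, Decidable (P σ)] :
    0 ≤ ∑ σ : Fin n → Bool, if P σ then w σ else 0 :=
  Finset.sum_nonneg fun σ _ => by split <;> simp [hw0 σ]

private lemma bddHPLO (hw0 : ∀ σ, 0 ≤ w σ) (hw1 : ∑ σ : Fin n → Bool, w σ = 1) :
    BddAbove (Set.range (fun y : ℝ =>
      ∑ σ : Fin n → Bool, if ∑ i, spin (σ i) = y then w σ else 0)) := by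
  refine ⟨1, ?_⟩
  rintro _ ⟨y, rfl⟩
  exact sum_if_le_onePLO w hw0 hw1 _

private lemma layer_boundPLO (hw0 : ∀ σ, 0 ≤ w σ) (hw1 : ∑ σ : Fin n → Bool, w σ = 1)
    (hex : ∀ π : Equiv.Perm (Fin n), ∀ σ : Fin n → Bool, w (σ ∘ π) = w σ)
    (r : ℕ) (hr : r ≤ n) (σ0 : Fin n → Bool)
    (h0 : (Finset.univ.filter (fun i => σ0 i = true)).card = r) :
    w σ0 * (n.choose r : ℝ)
      ≤ ⨆ y : ℝ, ∑ σ : Fin n → Bool, if ∑ i, spin (σ i) = y then w σ else 0 := by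
  classical
  have h1 : ∑ σ : Fin n → Bool,
      (if (Finset.univ.filter (fun i => σ i = true)).card = r then w σ else 0)
      = w σ0 * (n.choose r : ℝ) := by
    rw [sum_bool_finsetPLO
      (fun σ => if (Finset.univ.filter (fun i => σ i = true)).card = r then w σ else 0)]
    have hterm : ∀ s : Finset (Fin n),
        (if (Finset.univ.filter (fun i => decide (i ∈ s) = true)).card = r
          then w (fun i => decide (i ∈ s)) else 0)
        = (if s.card = r then w σ0 else 0) := by
      intro s
      rw [filter_decide_memPLO]
      by_cases h : s.card = r
      · rw [if_pos h, if_pos h]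
        exact w_card_eqPLO w hex _ σ0 (by rw [filter_decide_memPLO, h, h0])
      · rw [if_neg h, if_neg h]
    rw [Finset.sum_congr rfl (fun s _ => hterm s), ← Finset.sum_filter, Finset.sum_const]
    have hps : Finset.univ.filter (fun s : Finset (Fin n) => s.card = r)
        = Finset.powersetCard r (Finset.univ : Finset (Fin n)) := by
      rw [Finset.powersetCard_eq_filter, Finset.powerset_univ]
    rw [hps, Finset.card_powersetCard, Finset.card_univ, Fintype.card_fin,
      nsmul_eq_mul, mul_comm]
  have h2 : (∑ σ : Fin n → Bool,
        if ∑ i, spin (σ i) = (2 * (r:ℝ) - n) then w σ else 0)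
      = ∑ σ : Fin n → Bool,
        (if (Finset.univ.filter (fun i => σ i = true)).card = r then w σ else 0) := by
    refine Finset.sum_congr rfl (fun σ _ => ?_)
    have hiff : (∑ i, spin (σ i) = (2 * (r:ℝ) - n))
        ↔ (Finset.univ.filter (fun i => σ i = true)).card = r := by
      rw [sum_spinPLO]
      constructor
      · intro h
        have : ((Finset.univ.filter (fun i => σ i = true)).card : ℝ) = r := by linarith
        exact_mod_cast this
      · intro h; rw [h]
    simp only [hiff]
  calc w σ0 * (n.choose r : ℝ)
      = ∑ σ : Fin n → Bool,
        (if ∑ i, spin (σ i) = (2 * (r:ℝ) - n) then w σ else 0) := by rw [h2, h1]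
    _ ≤ _ := le_ciSup (bddHPLO w hw0 hw1) (2 * (r:ℝ) - n)

private lemma key_lePLO (hw0 : ∀ σ, 0 ≤ w σ) (hw1 : ∑ σ : Fin n → Bool, w σ = 1)
    (hex : ∀ π : Equiv.Perm (Fin n), ∀ σ : Fin n → Bool, w (σ ∘ π) = w σ)
    (x : ℝ) (v : Fin n → ℝ) (hv : ∀ i, 1 ≤ v i) :
    (∑ σ : Fin n → Bool,
        if ∑ i, v i * spin (σ i) ∈ Set.Ioo (x - 1) (x + 1) then w σ else 0)
      ≤ ⨆ y : ℝ, ∑ σ : Fin n → Bool, if ∑ i, spin (σ i) = y then w σ else 0 := by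
  classical
  set M := ⨆ y : ℝ, ∑ σ : Fin n → Bool, if ∑ i, spin (σ i) = y then w σ else 0 with hM
  have hM0 : 0 ≤ M :=
    le_trans (sum_if_nonnegPLO w hw0 (fun σ => ∑ i, spin (σ i) = 0))
      (le_ciSup (bddHPLO w hw0 hw1) 0)
  set g : Finset (Fin n) → ℝ := fun s => ∑ i, v i * spin (decide (i ∈ s)) with hg
  set 𝒜 := Finset.univ.filter
    (fun s : Finset (Fin n) => g s ∈ Set.Ioo (x-1) (x+1)) with hA
  have hanti : IsAntichain (· ⊆ ·) (𝒜 : Set (Finset (Fin n))) := by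
    intro s hs t ht hne hsub
    simp only [hA, Finset.coe_filter, Set.mem_setOf_eq, Finset.mem_univ, true_and,
      Set.mem_Ioo] at hs ht
    obtain ⟨j, hj⟩ : (t \ s).Nonempty :=
      Finset.sdiff_nonempty.mpr (fun h => hne (Finset.Subset.antisymm hsub h))
    have hdiff : g t - g s = ∑ i ∈ t \ s, 2 * v i := by
      rw [hg]
      simp only []
      rw [← Finset.sum_sub_distrib]
      have hterm : ∀ i ∈ Finset.univ,
          v i * spin (decide (i ∈ t)) - v i * spin (decide (i ∈ s))
          = if i ∈ t \ s then 2 * v i else 0 := by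
        intro i _
        by_cases his : i ∈ s
        · have hit : i ∈ t := hsub his
          simp [spin, his, hit, Finset.mem_sdiff]
        · by_cases hit : i ∈ t
          · simp [spin, his, hit, Finset.mem_sdiff]
            ring
          · simp [spin, his, hit, Finset.mem_sdiff]
      rw [Finset.sum_congr rfl hterm, Finset.sum_ite_mem, Finset.univ_inter]
    have h2 : (2:ℝ) ≤ ∑ i ∈ t \ s, 2 * v i := by
      calc (2:ℝ) = 2 * 1 := by ring
        _ ≤ 2 * v j := by linarith [hv j]
        _ ≤ ∑ i ∈ t \ s, 2 * v i :=
            Finset.single_le_sum (f := fun i => 2 * v i)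
              (fun i _ => show (0:ℝ) ≤ 2 * v i by linarith [hv i]) hj
    linarith [hs.1, hs.2, ht.1, ht.2, hdiff]
  rw [sum_bool_finsetPLO
    (fun σ => if ∑ i, v i * spin (σ i) ∈ Set.Ioo (x - 1) (x + 1) then w σ else 0)]
  have hbody : ∀ s : Finset (Fin n),
      (if ∑ i, v i * spin (decide (i ∈ s)) ∈ Set.Ioo (x - 1) (x + 1)
        then w (fun i => decide (i ∈ s)) else 0)
      = (if g s ∈ Set.Ioo (x - 1) (x + 1) then w (fun i => decide (i ∈ s)) else 0) := by
    intro s; rfl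
  rw [Finset.sum_congr rfl (fun s _ => hbody s), ← Finset.sum_filter, ← hA]
  have hmaps : ∀ s ∈ 𝒜, s.card ∈ Finset.range (n+1) := fun s _ =>
    Finset.mem_range.mpr (Nat.lt_succ_of_le (by simpa using Finset.card_le_univ s))
  rw [← Finset.sum_fiberwise_of_maps_to hmaps (fun s => w (fun i => decide (i ∈ s)))]
  have hslice : ∀ r ∈ Finset.range (n+1),
      (∑ s ∈ 𝒜.filter (fun s => s.card = r), w (fun i => decide (i ∈ s)))
        ≤ ((𝒜.filter (fun s => s.card = r)).card : ℝ) / (n.choose r) * M := by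
    intro r hr
    have hrn : r ≤ n := Nat.lt_succ_iff.mp (Finset.mem_range.mp hr)
    have hch : 0 < (n.choose r : ℝ) := by exact_mod_cast Nat.choose_pos hrn
    have hterm : ∀ s ∈ 𝒜.filter (fun s => s.card = r),
        w (fun i => decide (i ∈ s)) ≤ M / (n.choose r) := by
      intro s hs
      have hcard : s.card = r := (Finset.mem_filter.mp hs).2
      have hlb := layer_boundPLO w hw0 hw1 hex r hrn (fun i => decide (i ∈ s))
        (by rw [filter_decide_memPLO]; exact hcard)
      rw [le_div_iff₀ hch]
      exact hlb
    calc (∑ s ∈ 𝒜.filter (fun s => s.card = r), w (fun i => decide (i ∈ s)))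
        ≤ ∑ _s ∈ 𝒜.filter (fun s => s.card = r), M / (n.choose r) :=
          Finset.sum_le_sum hterm
      _ = ((𝒜.filter (fun s => s.card = r)).card : ℝ) * (M / (n.choose r)) := by
          rw [Finset.sum_const, nsmul_eq_mul]
      _ = ((𝒜.filter (fun s => s.card = r)).card : ℝ) / (n.choose r) * M := by ring
  calc (∑ r ∈ Finset.range (n+1),
        ∑ s ∈ 𝒜.filter (fun s => s.card = r), w (fun i => decide (i ∈ s)))
      ≤ ∑ r ∈ Finset.range (n+1),
          ((𝒜.filter (fun s => s.card = r)).card : ℝ) / (n.choose r) * M :=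
        Finset.sum_le_sum hslice
    _ = (∑ r ∈ Finset.range (n+1),
          ((𝒜.filter (fun s => s.card = r)).card : ℝ) / (n.choose r)) * M := by
        rw [Finset.sum_mul]
    _ ≤ 1 * M := by
        refine mul_le_mul_of_nonneg_right ?_ hM0
        have hlym := Finset.sum_card_slice_div_choose_le_one (𝕜 := ℝ) hanti
        simp only [Fintype.card_fin] at hlym
        exact hlym
    _ = M := one_mul M

end Aux

/-- Positive Littlewood-Offord problem for exchangeable `{-1,1}`-valued random vectors:
if the law `w` of `ε = (ε_1,…,ε_n)` (a probability mass function on `{-1,1}^n`) is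
invariant under every permutation of the coordinates, then
`sup_x sup_{v_i ≥ 1} P(∑ v_i ε_i ∈ (x-1,x+1)) = sup_x P(ε_1 + ⋯ + ε_n ∈ (x-1,x+1))`
`= sup_x P(ε_1 + ⋯ + ε_n = x)`. -/
theorem exchangeable_positive_littlewood_offord (n : ℕ) (hn : 1 ≤ n)
    (w : (Fin n → Bool) → ℝ) (hw0 : ∀ σ, 0 ≤ w σ) (hw1 : ∑ σ : Fin n → Bool, w σ = 1)
    (hex : ∀ π : Equiv.Perm (Fin n), ∀ σ : Fin n → Bool, w (σ ∘ π) = w σ) :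
    (⨆ x : ℝ, ⨆ v : {v : Fin n → ℝ // ∀ i, 1 ≤ v i},
        ∑ σ : Fin n → Bool,
          if ∑ i, v.1 i * spin (σ i) ∈ Set.Ioo (x - 1) (x + 1) then w σ else 0)
      = (⨆ x : ℝ, ∑ σ : Fin n → Bool,
          if ∑ i, spin (σ i) ∈ Set.Ioo (x - 1) (x + 1) then w σ else 0) ∧
    (⨆ x : ℝ, ⨆ v : {v : Fin n → ℝ // ∀ i, 1 ≤ v i},
        ∑ σ : Fin n → Bool,
          if ∑ i, v.1 i * spin (σ i) ∈ Set.Ioo (x - 1) (x + 1) then w σ else 0)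
      = (⨆ x : ℝ, ∑ σ : Fin n → Bool, if ∑ i, spin (σ i) = x then w σ else 0) := by
  classical
  set M := ⨆ y : ℝ, ∑ σ : Fin n → Bool, if ∑ i, spin (σ i) = y then w σ else 0 with hM
  have hM0 : 0 ≤ M :=
    le_trans (sum_if_nonnegPLO w hw0 (fun σ => ∑ i, spin (σ i) = 0))
      (le_ciSup (bddHPLO w hw0 hw1) 0)
  have hbddG : BddAbove (Set.range (fun x : ℝ => ∑ σ : Fin n → Bool,
      if ∑ i, spin (σ i) ∈ Set.Ioo (x - 1) (x + 1) then w σ else 0)) := by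
    refine ⟨1, ?_⟩; rintro _ ⟨y, rfl⟩; exact sum_if_le_onePLO w hw0 hw1 _
  have hbddF : ∀ x : ℝ, BddAbove (Set.range (fun v : {v : Fin n → ℝ // ∀ i, 1 ≤ v i} =>
      ∑ σ : Fin n → Bool,
        if ∑ i, v.1 i * spin (σ i) ∈ Set.Ioo (x - 1) (x + 1) then w σ else 0)) := by
    intro x
    refine ⟨1, ?_⟩; rintro _ ⟨v, rfl⟩; exact sum_if_le_onePLO w hw0 hw1 _
  have hbddL : BddAbove (Set.range (fun x : ℝ =>
      ⨆ v : {v : Fin n → ℝ // ∀ i, 1 ≤ v i},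
        ∑ σ : Fin n → Bool,
          if ∑ i, v.1 i * spin (σ i) ∈ Set.Ioo (x - 1) (x + 1) then w σ else 0)) := by
    refine ⟨1, ?_⟩; rintro _ ⟨y, rfl⟩
    exact Real.iSup_le (fun v => sum_if_le_onePLO w hw0 hw1 _) zero_le_one
  have hLM : (⨆ x : ℝ, ⨆ v : {v : Fin n → ℝ // ∀ i, 1 ≤ v i},
      ∑ σ : Fin n → Bool,
        if ∑ i, v.1 i * spin (σ i) ∈ Set.Ioo (x - 1) (x + 1) then w σ else 0) ≤ M :=
    Real.iSup_le (fun x =>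
      Real.iSup_le (fun v => key_lePLO w hw0 hw1 hex x v.1 v.2) hM0) hM0
  have hMG : M ≤ ⨆ x : ℝ, ∑ σ : Fin n → Bool,
      if ∑ i, spin (σ i) ∈ Set.Ioo (x - 1) (x + 1) then w σ else 0 := by
    refine Real.iSup_le (fun y => ?_)
      (Real.iSup_nonneg fun x => sum_if_nonnegPLO w hw0 _)
    have h1 : (∑ σ : Fin n → Bool, if ∑ i, spin (σ i) = y then w σ else 0)
        ≤ ∑ σ : Fin n → Bool,
          if ∑ i, spin (σ i) ∈ Set.Ioo (y - 1) (y + 1) then w σ else 0 := by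
      refine Finset.sum_le_sum fun σ _ => ?_
      by_cases h : ∑ i, spin (σ i) = y
      · rw [if_pos h, if_pos (by rw [h]; constructor <;> linarith)]
      · rw [if_neg h]; split <;> simp [hw0 σ]
    exact h1.trans (le_ciSup hbddG y)
  have hGL : (⨆ x : ℝ, ∑ σ : Fin n → Bool,
      if ∑ i, spin (σ i) ∈ Set.Ioo (x - 1) (x + 1) then w σ else 0)
      ≤ ⨆ x : ℝ, ⨆ v : {v : Fin n → ℝ // ∀ i, 1 ≤ v i},
        ∑ σ : Fin n → Bool,
          if ∑ i, v.1 i * spin (σ i) ∈ Set.Ioo (x - 1) (x + 1) then w σ else 0 := by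
    refine Real.iSup_le (fun x => ?_)
      (Real.iSup_nonneg fun x => Real.iSup_nonneg fun v => sum_if_nonnegPLO w hw0 _)
    have hone : (∑ σ : Fin n → Bool,
        if ∑ i, ((⟨fun _ => 1, fun i => le_refl 1⟩ :
            {v : Fin n → ℝ // ∀ i, 1 ≤ v i}) : {v : Fin n → ℝ // ∀ i, 1 ≤ v i}).1 i
            * spin (σ i) ∈ Set.Ioo (x - 1) (x + 1) then w σ else 0)
        = ∑ σ : Fin n → Bool,
          if ∑ i, spin (σ i) ∈ Set.Ioo (x - 1) (x + 1) then w σ else 0 := by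
      simp only [one_mul]
    calc (∑ σ : Fin n → Bool,
          if ∑ i, spin (σ i) ∈ Set.Ioo (x - 1) (x + 1) then w σ else 0)
        ≤ ⨆ v : {v : Fin n → ℝ // ∀ i, 1 ≤ v i},
            ∑ σ : Fin n → Bool,
              if ∑ i, v.1 i * spin (σ i) ∈ Set.Ioo (x - 1) (x + 1) then w σ else 0 := by
          rw [← hone]
          exact le_ciSup (hbddF x) ⟨fun _ => 1, fun i => le_refl 1⟩
      _ ≤ _ := le_ciSup hbddL x
  exact ⟨le_antisymm (hLM.trans hMG) hGL, le_antisymm hLM (hMG.trans hGL)⟩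
end
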